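/- arXiv:1501.02501 — 6 statements merged into one kernel-verified Lean document; each statement's English description precedes it below -/
import Mathlib

section
/- Let H be a real Hilbert space, f, g : H → ℝ ∪ {+∞} proper, lower semicontinuous, convex with dom g ⊆ dom f, f Fréchet differentiable on an open set containing dom g, δ ∈ (0, 1/2). Let (x^k) ⊂ dom g and (α_k) satisfy x^{k+1} = prox_{α_k g}(x^k − α_k ∇f(x^k)) and α_k‖∇f(x^{k+1}) − ∇f(x^k)‖ ≤ δ‖x^{k+1} − x^k‖ for all k. Suppose the set S* of minimizers of f+g is nonempty, α_k ≥ α > 0 for all k, and either f or g is strongly convex with modulus μ > 0. Then S* = {x_*} is a singleton and for all k: ‖x^{k+1} − x_*‖ ≤ (1/√(1+αμ))·‖x^k − x_*‖ ≤ (1/√(1+αμ))^{k+1}·‖x⁰ − x_*‖; i.e., (x^k) converges strongly to x_* at linear rate 1/√(1+αμ) < 1. -/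
open Set Filter Topology Bornology RealInnerProductSpace

noncomputable section

variable {H : Type*} [NormedAddCommGroup H] [InnerProductSpace ℝ H] [CompleteSpace H]

/-- The effective domain of an extended-real-valued function. -/
def edom (h : H → EReal) : Set H := {x | h x < ⊤}

/-- `h` is a proper, lower semicontinuous, convex extended-real-valued function. -/
def ProperLscConvex (h : H → EReal) : Prop :=
  (∃ x, h x < ⊤) ∧ (∀ x, ⊥ < h x) ∧ LowerSemicontinuous h ∧
    ∀ x y : H, ∀ a b : ℝ, 0 ≤ a → 0 ≤ b → a + b = 1 →
      h (a • x + b • y) ≤ (a : EReal) * h x + (b : EReal) * h y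

/-- `p` is the proximal point `prox_{αg}(z)`, i.e. a minimizer of
`y ↦ g(y) + (1/(2α))‖y - z‖²` (such a minimizer is automatically unique). -/
def IsProxPt (g : H → EReal) (α : ℝ) (z p : H) : Prop :=
  ∀ y : H, g p + (((1 / (2 * α)) * ‖p - z‖ ^ 2 : ℝ) : EReal)
    ≤ g y + (((1 / (2 * α)) * ‖y - z‖ ^ 2 : ℝ) : EReal)

/-- `f` is Fréchet differentiable, with gradient `f'`, on an open set containing `s`
(in particular `f` is finite there). -/
def GradOnOpenSupset (f : H → EReal) (f' : H → H) (s : Set H) : Prop :=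
  ∃ U : Set H, IsOpen U ∧ s ⊆ U ∧
    ∀ x ∈ U, f x ≠ ⊤ ∧ HasGradientAt (fun y => (f y).toReal) (f' x) x

/-- Second half of Assumption A2: `f'` is uniformly continuous on bounded subsets of
`dom g` and maps bounded subsets of `dom g` to bounded sets. -/
def UCBddOnBounded (g : H → EReal) (f' : H → H) : Prop :=
  ∀ A : Set H, A ⊆ edom g → IsBounded A →
    UniformContinuousOn f' A ∧ IsBounded (f' '' A)

/-- The Linesearch-1 acceptance inequality at the point `x` with stepsize `α`. -/
def LS1 (f' : H → H) (J : H → ℝ → H) (δ : ℝ) (x : H) (α : ℝ) : Prop :=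
  α * ‖f' (J x α) - f' x‖ ≤ δ * ‖J x α - x‖

/-- `α` is the output of Linesearch 1 at `x`: the largest element of
`{σ, σθ, σθ², …}` satisfying the acceptance inequality. -/
def LS1Step (f' : H → H) (J : H → ℝ → H) (δ σ θ : ℝ) (x : H) (α : ℝ) : Prop :=
  ∃ n : ℕ, α = σ * θ ^ n ∧ LS1 f' J δ x α ∧
    ∀ m : ℕ, m < n → ¬ LS1 f' J δ x (σ * θ ^ m)

/-- The set of minimizers `S⁎` of `f + g` over `H`. -/
def argminSet (f g : H → EReal) : Set H := {x | ∀ y, f x + g x ≤ f y + g y}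

/-- The Linesearch-2 acceptance inequality at `x` (with `Jx = prox_g(x - ∇f(x))`)
with stepsize `β`. -/
def LS2Ineq (f g : H → EReal) (f' : H → H) (x Jx : H) (β : ℝ) : Prop :=
  f (x - β • (x - Jx)) + g (x - β • (x - Jx)) ≤
    f x + g x - (β : EReal) * (g x - g Jx)
      - ((β * ⟪f' x, x - Jx⟫ : ℝ) : EReal) + (((β / 2) * ‖x - Jx‖ ^ 2 : ℝ) : EReal)

/-- `v` belongs to the convex subdifferential `∂h(y)`. -/
def InSubdiff (h : H → EReal) (y v : H) : Prop :=
  ∀ z : H, ((⟪v, z - y⟫ : ℝ) : EReal) ≤ h z - h y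

/-- `h` is strongly convex with modulus `μ`. -/
def StrongConvexWith (h : H → EReal) (μ : ℝ) : Prop :=
  ∀ x y v : H, InSubdiff h y v →
    h y + ((⟪v, x - y⟫ : ℝ) : EReal) + (((μ / 2) * ‖x - y‖ ^ 2 : ℝ) : EReal) ≤ h x

/-! ### Auxiliary lemmas -/

private lemma slope_le_of_grad {φ : H → ℝ} {G y h : H} (hφ : HasGradientAt φ G y) {r : ℝ}
    (hev : ∀ᶠ t in 𝓝[>] (0 : ℝ), (φ (y + t • h) - φ y) / t ≤ r) : ⟪G, h⟫ ≤ r := by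
  have hc : HasDerivAt (fun t : ℝ => y + t • h) h 0 := by
    simpa using ((hasDerivAt_id (0 : ℝ)).smul_const h).const_add y
  have hf : HasFDerivAt φ (InnerProductSpace.toDual ℝ H G) ((fun t : ℝ => y + t • h) 0) := by
    simpa using (hasGradientAt_iff_hasFDerivAt.1 hφ)
  have hcomp := hf.comp_hasDerivAt 0 hc
  rw [InnerProductSpace.toDual_apply_apply] at hcomp
  have htend' : Tendsto (slope (φ ∘ fun t : ℝ => y + t • h) 0) (𝓝[>] (0 : ℝ)) (𝓝 ⟪G, h⟫) :=
    (hasDerivAt_iff_tendsto_slope.1 hcomp).mono_left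
      (nhdsWithin_mono 0 (fun t ht => Set.mem_compl_singleton_iff.mpr (ne_of_gt ht)))
  refine le_of_tendsto htend' ?_
  filter_upwards [hev, self_mem_nhdsWithin] with t hle ht
  simpa [slope_def_field, Function.comp] using hle

private lemma eventually_seg_mem {U : Set H} (hU : IsOpen U) {y : H} (hy : y ∈ U) (h : H) :
    ∀ᶠ t in 𝓝[>] (0 : ℝ), y + t • h ∈ U := by
  have hc : ContinuousAt (fun t : ℝ => y + t • h) 0 :=
    (continuous_const.add (continuous_id.smul continuous_const)).continuousAt
  have : ∀ᶠ t in 𝓝 (0 : ℝ), y + t • h ∈ U :=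
    hc.eventually_mem (hU.mem_nhds (by simpa using hy))
  exact this.filter_mono nhdsWithin_le_nhds

private lemma insubdiff_real {h : H → EReal} {y v z : H} (hs : InSubdiff h y v)
    (hyt : h y ≠ ⊤) (hyb : h y ≠ ⊥) (hzt : h z ≠ ⊤) (hzb : h z ≠ ⊥) :
    ⟪v, z - y⟫ ≤ (h z).toReal - (h y).toReal := by
  have := hs z
  rw [← EReal.coe_toReal hzt hzb, ← EReal.coe_toReal hyt hyb, ← EReal.coe_sub,
    EReal.coe_le_coe_iff] at this
  exact this

private lemma convex_toReal {h : H → EReal}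
    (hconv : ∀ x y : H, ∀ a b : ℝ, 0 ≤ a → 0 ≤ b → a + b = 1 →
      h (a • x + b • y) ≤ (a : EReal) * h x + (b : EReal) * h y)
    {x y : H} (hxt : h x ≠ ⊤) (hxb : h x ≠ ⊥) (hyt : h y ≠ ⊤) (hyb : h y ≠ ⊥)
    {t : ℝ} (ht0 : 0 ≤ t) (ht1 : t ≤ 1) :
    h (x + t • (y - x)) ≤ (((1 - t) * (h x).toReal + t * (h y).toReal : ℝ) : EReal) := by
  have heq : (1 - t) • x + t • y = x + t • (y - x) := by module
  have := hconv x y (1 - t) t (by linarith) ht0 (by ring)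
  rwa [heq, ← EReal.coe_toReal hxt hxb, ← EReal.coe_toReal hyt hyb, ← EReal.coe_mul,
    ← EReal.coe_mul, ← EReal.coe_add] at this

private lemma grad_mem_subdiff {f : H → EReal} {f' : H → H}
    (hf : ProperLscConvex f) {U : Set H} (hU : IsOpen U)
    (hfin : ∀ x ∈ U, f x ≠ ⊤)
    (hgrad : ∀ x ∈ U, HasGradientAt (fun y => (f y).toReal) (f' x) x)
    {y : H} (hy : y ∈ U) : InSubdiff f y (f' y) := by
  intro z
  have hyt := hfin y hy
  have hyb := (hf.2.1 y).ne'
  by_cases hzt : f z = ⊤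
  · rw [hzt, ← EReal.coe_toReal hyt hyb, EReal.top_sub_coe]
    exact le_top
  · have hzb := (hf.2.1 z).ne'
    rw [← EReal.coe_toReal hzt hzb, ← EReal.coe_toReal hyt hyb, ← EReal.coe_sub,
      EReal.coe_le_coe_iff]
    refine slope_le_of_grad (hgrad y hy) ?_
    filter_upwards [eventually_seg_mem hU hy (z - y), Ioo_mem_nhdsGT_of_mem
      (Set.mem_Ico.2 ⟨le_refl (0 : ℝ), one_pos⟩)] with t hmem ht
    have key := convex_toReal hf.2.2.2 hyt hyb hzt hzb ht.1.le ht.2.le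
    have h1 : (f (y + t • (z - y))).toReal ≤
        (1 - t) * (f y).toReal + t * (f z).toReal := by
      have := EReal.toReal_le_toReal key (hf.2.1 _).ne' (EReal.coe_ne_top _)
      rwa [EReal.toReal_coe] at this
    rw [div_le_iff₀ ht.1]
    nlinarith [h1]

private lemma argmin_mem_edom {f g : H → EReal} (hf : ProperLscConvex f)
    (hg : ProperLscConvex g) (hdom : edom g ⊆ edom f) {xs : H}
    (hxs : xs ∈ argminSet f g) : xs ∈ edom g := by
  obtain ⟨x0, hx0⟩ := hg.1
  have hx0f : f x0 < ⊤ := hdom hx0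
  have hle := hxs x0
  by_contra htop
  have hgtop : g xs = ⊤ := by
    simpa [edom, lt_top_iff_ne_top, not_not] using htop
  rw [hgtop] at hle
  have htop' : f xs + ⊤ = ⊤ := EReal.add_top_of_ne_bot (hf.2.1 xs).ne'
  rw [htop'] at hle
  have hfin : f x0 + g x0 < ⊤ := by
    rw [← EReal.coe_toReal hx0f.ne (hf.2.1 x0).ne', ← EReal.coe_toReal hx0.ne (hg.2.1 x0).ne',
      ← EReal.coe_add]
    exact EReal.coe_lt_top _
  exact hfin.ne (top_le_iff.1 hle)

private lemma argmin_le_real {f g : H → EReal} (hf : ProperLscConvex f)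
    (hg : ProperLscConvex g) (hdom : edom g ⊆ edom f) {xs : H}
    (hxs : xs ∈ argminSet f g) {w : H} (hw : w ∈ edom g) :
    (f xs).toReal + (g xs).toReal ≤ (f w).toReal + (g w).toReal := by
  have hxg := argmin_mem_edom hf hg hdom hxs
  have hxf := hdom hxg
  have hwf := hdom hw
  have hle := hxs w
  rw [← EReal.coe_toReal hxf.ne (hf.2.1 xs).ne', ← EReal.coe_toReal hxg.ne (hg.2.1 xs).ne',
    ← EReal.coe_toReal hwf.ne (hf.2.1 w).ne', ← EReal.coe_toReal hw.ne (hg.2.1 w).ne',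
    ← EReal.coe_add, ← EReal.coe_add, EReal.coe_le_coe_iff] at hle
  exact hle

private lemma fermat_rule {f g : H → EReal} {f' : H → H}
    (hf : ProperLscConvex f) (hg : ProperLscConvex g) (hdom : edom g ⊆ edom f)
    {U : Set H} (hU : IsOpen U) (hUg : edom g ⊆ U)
    (hfin : ∀ x ∈ U, f x ≠ ⊤)
    (hgrad : ∀ x ∈ U, HasGradientAt (fun y => (f y).toReal) (f' x) x)
    {xs : H} (hxs : xs ∈ argminSet f g) : InSubdiff g xs (-(f' xs)) := by
  have hxg : xs ∈ edom g := argmin_mem_edom hf hg hdom hxs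
  have hxU : xs ∈ U := hUg hxg
  have hxf : f xs ≠ ⊤ := (hdom hxg).ne
  have hxfb := (hf.2.1 xs).ne'
  have hxgb := (hg.2.1 xs).ne'
  intro z
  by_cases hzt : g z = ⊤
  · rw [hzt, ← EReal.coe_toReal hxg.ne hxgb, EReal.top_sub_coe]
    exact le_top
  · have hzb := (hg.2.1 z).ne'
    rw [← EReal.coe_toReal hzt hzb, ← EReal.coe_toReal hxg.ne hxgb, ← EReal.coe_sub,
      EReal.coe_le_coe_iff]
    have hneg : HasGradientAt (fun y => -((f y).toReal)) (-(f' xs)) xs := by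
      rw [hasGradientAt_iff_hasFDerivAt]
      have h1 := (hasGradientAt_iff_hasFDerivAt.1 (hgrad xs hxU)).neg
      rwa [show -(InnerProductSpace.toDual ℝ H (f' xs))
          = InnerProductSpace.toDual ℝ H (-(f' xs)) from (map_neg _ _).symm] at h1
    have := slope_le_of_grad (φ := fun y => -((f y).toReal)) (h := z - xs) hneg (r := (g z).toReal - (g xs).toReal) ?_
    · simpa [inner_neg_left] using this
    filter_upwards [eventually_seg_mem hU hxU (z - xs), Ioo_mem_nhdsGT_of_mem
      (Set.mem_Ico.2 ⟨le_refl (0 : ℝ), one_pos⟩)] with t hmem ht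
    have key := convex_toReal hg.2.2.2 hxg.ne hxgb hzt hzb ht.1.le ht.2.le
    set xt := xs + t • (z - xs) with hxt
    have hxtf : f xt ≠ ⊤ := hfin xt hmem
    have hxtfb := (hf.2.1 xt).ne'
    have hxtgb := (hg.2.1 xt).ne'
    have hmin := hxs xt
    have hchain : f xs + g xs ≤ f xt + (((1 - t) * (g xs).toReal + t * (g z).toReal : ℝ) : EReal) :=
      le_trans hmin (add_le_add_right key _)
    rw [← EReal.coe_toReal hxf hxfb, ← EReal.coe_toReal hxg.ne hxgb,
      ← EReal.coe_toReal hxtf hxtfb, ← EReal.coe_add, ← EReal.coe_add,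
      EReal.coe_le_coe_iff] at hchain
    simp only [EReal.toReal_coe] at hchain
    rw [div_le_iff₀ ht.1]
    nlinarith [hchain]

private lemma prox_subdiff {g : H → EReal} (hg : ProperLscConvex g) {a : ℝ} (ha : 0 < a)
    {z p : H} (hp : IsProxPt g a z p) (hpt : g p ≠ ⊤) :
    InSubdiff g p ((1 / a) • (z - p)) := by
  have hpb := (hg.2.1 p).ne'
  intro w
  by_cases hwt : g w = ⊤
  · rw [hwt, ← EReal.coe_toReal hpt hpb, EReal.top_sub_coe]
    exact le_top
  · have hwb := (hg.2.1 w).ne'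
    rw [← EReal.coe_toReal hwt hwb, ← EReal.coe_toReal hpt hpb, ← EReal.coe_sub,
      EReal.coe_le_coe_iff]
    have hkey : ∀ t : ℝ, 0 < t → t ≤ 1 →
        ⟪(1 / a) • (z - p), w - p⟫ ≤ (g w).toReal - (g p).toReal
          + t * (1 / (2 * a)) * ‖w - p‖ ^ 2 := by
      intro t ht0 ht1
      set yt := p + t • (w - p) with hyt
      have key := convex_toReal hg.2.2.2 hpt hpb hwt hwb ht0.le ht1
      have hprox := hp yt
      have hytb := (hg.2.1 yt).ne'
      have hchain : g p + (((1 / (2 * a)) * ‖p - z‖ ^ 2 : ℝ) : EReal)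
          ≤ (((1 - t) * (g p).toReal + t * (g w).toReal : ℝ) : EReal)
            + (((1 / (2 * a)) * ‖yt - z‖ ^ 2 : ℝ) : EReal) :=
        le_trans hprox (add_le_add_left key _)
      rw [← EReal.coe_toReal hpt hpb, ← EReal.coe_add, ← EReal.coe_add,
        EReal.coe_le_coe_iff] at hchain
      simp only [EReal.toReal_coe] at hchain
      have hexp : ‖yt - z‖ ^ 2 = ‖p - z‖ ^ 2 + 2 * (t * ⟪p - z, w - p⟫) + t ^ 2 * ‖w - p‖ ^ 2 := by
        have : yt - z = (p - z) + t • (w - p) := by rw [hyt]; abel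
        rw [this, norm_add_sq_real, real_inner_smul_right, norm_smul]
        simp [Real.norm_eq_abs, abs_of_pos ht0, mul_pow]
        try ring
      rw [hexp] at hchain
      have hinner : ⟪(1 / a) • (z - p), w - p⟫ = (1 / a) * ⟪z - p, w - p⟫ :=
        real_inner_smul_left _ _ _
      have hflip : ⟪z - p, w - p⟫ = -⟪p - z, w - p⟫ := by
        rw [show z - p = -(p - z) by abel, inner_neg_left]
      have hinv : (1 : ℝ) / a = 2 * (1 / (2 * a)) := by
        field_simp
      rw [hinner, hflip, hinv]
      set I := ⟪p - z, w - p⟫ with hI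
      set W := ‖w - p‖ ^ 2 with hW
      set b := (1 : ℝ) / (2 * a) with hb
      -- hchain : Gp + b * ‖p-z‖^2 ≤ (1-t)*Gp + t*Gw + b*(‖p-z‖^2 + 2*(t*I) + t^2*W)
      have hX : 0 ≤ t * ((g w).toReal - (g p).toReal + 2 * b * I + t * b * W) := by
        nlinarith [hchain]
      have hX' : (0 : ℝ) ≤ (g w).toReal - (g p).toReal + 2 * b * I + t * b * W := by
        have := (mul_le_mul_iff_of_pos_left ht0).mp (by linarith : t * 0 ≤
          t * ((g w).toReal - (g p).toReal + 2 * b * I + t * b * W))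
        linarith
      linarith
    refine le_of_forall_pos_le_add ?_
    intro ε hε
    set C := (1 / (2 * a)) * ‖w - p‖ ^ 2 with hC
    have hC0 : 0 ≤ C := by positivity
    set t := min 1 (ε / (C + 1)) with ht
    have ht0 : 0 < t := lt_min one_pos (by positivity)
    have ht1 : t ≤ 1 := min_le_left _ _
    have := hkey t ht0 ht1
    have htC : t * (1 / (2 * a)) * ‖w - p‖ ^ 2 ≤ ε := by
      have h1 : t ≤ ε / (C + 1) := min_le_right _ _
      have : t * C ≤ (ε / (C + 1)) * C := by
        apply mul_le_mul_of_nonneg_right h1 hC0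
      have h2 : (ε / (C + 1)) * C ≤ ε := by
        rw [div_mul_eq_mul_div, div_le_iff₀ (by positivity)]
        nlinarith [hε.le, hC0]
      calc t * (1 / (2 * a)) * ‖w - p‖ ^ 2 = t * C := by rw [hC]; ring
        _ ≤ (ε / (C + 1)) * C := ‹_›
        _ ≤ ε := h2
    linarith

private lemma strong_real {h : H → EReal} {μ : ℝ} (hs : StrongConvexWith h μ) {x y v : H}
    (hv : InSubdiff h y v) (hyt : h y ≠ ⊤) (hyb : h y ≠ ⊥) (hxt : h x ≠ ⊤) (hxb : h x ≠ ⊥) :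
    (h y).toReal + ⟪v, x - y⟫ + μ / 2 * ‖x - y‖ ^ 2 ≤ (h x).toReal := by
  have := hs x y v hv
  rw [← EReal.coe_toReal hyt hyb, ← EReal.coe_toReal hxt hxb, ← EReal.coe_add,
    ← EReal.coe_add, EReal.coe_le_coe_iff] at this
  exact this

private lemma min_growth {f g : H → EReal} {f' : H → H}
    (hf : ProperLscConvex f) (hg : ProperLscConvex g) (hdom : edom g ⊆ edom f)
    {U : Set H} (hU : IsOpen U) (hUg : edom g ⊆ U)
    (hfin : ∀ x ∈ U, f x ≠ ⊤)
    (hgrad : ∀ x ∈ U, HasGradientAt (fun y => (f y).toReal) (f' x) x)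
    {μ : ℝ} (hstrong : StrongConvexWith f μ ∨ StrongConvexWith g μ)
    {xs : H} (hxs : xs ∈ argminSet f g) {w : H} (hw : w ∈ edom g) :
    (f xs).toReal + (g xs).toReal + μ / 2 * ‖w - xs‖ ^ 2
      ≤ (f w).toReal + (g w).toReal := by
  have hxg : xs ∈ edom g := argmin_mem_edom hf hg hdom hxs
  have hxf := hdom hxg
  have hwf := hdom hw
  have hferm : InSubdiff g xs (-(f' xs)) := fermat_rule hf hg hdom hU hUg hfin hgrad hxs
  have hfsub : InSubdiff f xs (f' xs) := grad_mem_subdiff hf hU hfin hgrad (hUg hxg)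
  rcases hstrong with hsf | hsg
  · have h1 := strong_real hsf hfsub hxf.ne (hf.2.1 xs).ne' hwf.ne (hf.2.1 w).ne'
    have h2 := insubdiff_real hferm hxg.ne (hg.2.1 xs).ne' hw.ne (hg.2.1 w).ne'
    rw [inner_neg_left] at h2
    linarith
  · have h1 := strong_real hsg hferm hxg.ne (hg.2.1 xs).ne' hw.ne (hg.2.1 w).ne'
    have h2 := insubdiff_real hfsub hxf.ne (hf.2.1 xs).ne' hwf.ne (hf.2.1 w).ne'
    rw [inner_neg_left] at h1
    linarith

private lemma key_step {f g : H → EReal} {f' : H → H}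
    (hf : ProperLscConvex f) (hg : ProperLscConvex g) (hdom : edom g ⊆ edom f)
    {U : Set H} (hU : IsOpen U) (hUg : edom g ⊆ U)
    (hfin : ∀ x ∈ U, f x ≠ ⊤)
    (hgrad : ∀ x ∈ U, HasGradientAt (fun y => (f y).toReal) (f' x) x)
    {δ : ℝ} (hδ : δ ∈ Set.Ioo (0 : ℝ) (1 / 2))
    {xk xp : H} (hxk : xk ∈ edom g) (hxp : xp ∈ edom g) {a : ℝ} (ha : 0 < a)
    (hprox : IsProxPt g a (xk - a • f' xk) xp)
    (hls : a * ‖f' xp - f' xk‖ ≤ δ * ‖xp - xk‖)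
    {xs : H} (hxs : xs ∈ argminSet f g)
    {α μ : ℝ} (hα : 0 < α) (hαa : α ≤ a) (hμ : 0 < μ)
    (hstrong : StrongConvexWith f μ ∨ StrongConvexWith g μ) :
    ‖xp - xs‖ * Real.sqrt (1 + α * μ) ≤ ‖xk - xs‖ := by
  have hxg : xs ∈ edom g := argmin_mem_edom hf hg hdom hxs
  have hxsf := hdom hxg
  have hkf := hdom hxk
  have hpf := hdom hxp
  -- real values
  set Fk := (f xk).toReal; set Fp := (f xp).toReal; set Fs := (f xs).toReal
  set Gk := (g xk).toReal; set Gp := (g xp).toReal; set Gs := (g xs).toReal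
  set u := ‖xp - xk‖; set d := ‖xp - xs‖; set c := ‖xk - xs‖
  -- subgradient from prox
  have hv : InSubdiff g xp ((1 / a) • (xk - a • f' xk - xp)) :=
    prox_subdiff hg ha hprox hxp.ne
  have ineq1 : ⟪(1 / a) • (xk - a • f' xk - xp), xs - xp⟫ ≤ Gs - Gp :=
    insubdiff_real hv hxp.ne (hg.2.1 xp).ne' hxg.ne (hg.2.1 xs).ne'
  have ineq2 : ⟪f' xk, xs - xk⟫ ≤ Fs - Fk :=
    insubdiff_real (grad_mem_subdiff hf hU hfin hgrad (hUg hxk)) hkf.ne (hf.2.1 xk).ne'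
      hxsf.ne (hf.2.1 xs).ne'
  have ineq3 : ⟪f' xp, xk - xp⟫ ≤ Fk - Fp :=
    insubdiff_real (grad_mem_subdiff hf hU hfin hgrad (hUg hxp)) hpf.ne (hf.2.1 xp).ne'
      hkf.ne (hf.2.1 xk).ne'
  have growth : Fs + Gs + μ / 2 * d ^ 2 ≤ Fp + Gp :=
    min_growth hf hg hdom hU hUg hfin hgrad hstrong hxs hxp
  -- expand the prox subgradient inner product
  have hexpand : ⟪(1 / a) • (xk - a • f' xk - xp), xs - xp⟫
      = (1 / a) * ⟪xk - xp, xs - xp⟫ - ⟪f' xk, xs - xp⟫ := by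
    rw [real_inner_smul_left, show xk - a • f' xk - xp = (xk - xp) - a • f' xk by abel,
      inner_sub_left, real_inner_smul_left]
    field_simp
  have hsplit : ⟪f' xk, xs - xp⟫ = ⟪f' xk, xs - xk⟫ + ⟪f' xk - f' xp, xk - xp⟫
      + ⟪f' xp, xk - xp⟫ := by
    rw [inner_sub_left]
    rw [show xs - xp = (xs - xk) + (xk - xp) by abel, inner_add_right]
    ring
  have hcauchy : ⟪f' xk - f' xp, xk - xp⟫ ≤ ‖f' xp - f' xk‖ * u := by
    have : ⟪f' xk - f' xp, xk - xp⟫ = ⟪f' xp - f' xk, xp - xk⟫ := by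
      rw [show f' xk - f' xp = -(f' xp - f' xk) by abel, show xk - xp = -(xp - xk) by abel,
        inner_neg_neg]
    rw [this]
    exact real_inner_le_norm _ _
  have hu0 : 0 ≤ u := norm_nonneg _
  have hLu : a * (⟪f' xk - f' xp, xk - xp⟫) ≤ δ * u ^ 2 := by
    have h1 : a * ⟪f' xk - f' xp, xk - xp⟫ ≤ a * (‖f' xp - f' xk‖ * u) :=
      mul_le_mul_of_nonneg_left hcauchy ha.le
    have h2 : a * (‖f' xp - f' xk‖ * u) = (a * ‖f' xp - f' xk‖) * u := by ring
    have h3 : (a * ‖f' xp - f' xk‖) * u ≤ (δ * u) * u :=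
      mul_le_mul_of_nonneg_right hls hu0
    nlinarith [h1, h3]
  -- main inequality on inner product
  have hI : ⟪xk - xp, xs - xp⟫ ≤ a * ((Fs + Gs) - (Fp + Gp)) + δ * u ^ 2 := by
    have h1 : (1 / a) * ⟪xk - xp, xs - xp⟫ - ⟪f' xk, xs - xp⟫ ≤ Gs - Gp := by
      rw [← hexpand]; exact ineq1
    have h2 : a * ((1 / a) * ⟪xk - xp, xs - xp⟫) = ⟪xk - xp, xs - xp⟫ := by
      field_simp
    have h3 : a * ((1 / a) * ⟪xk - xp, xs - xp⟫ - ⟪f' xk, xs - xp⟫) ≤ a * (Gs - Gp) :=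
      mul_le_mul_of_nonneg_left h1 ha.le
    rw [mul_sub, h2] at h3
    have h4 : a * ⟪f' xk, xs - xp⟫ ≤ a * ((Fs - Fk) + (Fk - Fp)) + δ * u ^ 2 := by
      rw [hsplit, mul_add, mul_add]
      have h5 : a * ⟪f' xk, xs - xk⟫ ≤ a * (Fs - Fk) :=
        mul_le_mul_of_nonneg_left ineq2 ha.le
      have h6 : a * ⟪f' xp, xk - xp⟫ ≤ a * (Fk - Fp) :=
        mul_le_mul_of_nonneg_left ineq3 ha.le
      linarith [hLu]
    nlinarith [h3, h4]
  -- growth term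
  have hgrow' : a * ((Fs + Gs) - (Fp + Gp)) ≤ -(α * μ / 2 * d ^ 2) := by
    have hd2 : 0 ≤ μ / 2 * d ^ 2 := by positivity
    have h1 : (Fs + Gs) - (Fp + Gp) ≤ -(μ / 2 * d ^ 2) := by linarith
    have h2 : a * ((Fs + Gs) - (Fp + Gp)) ≤ a * (-(μ / 2 * d ^ 2)) :=
      mul_le_mul_of_nonneg_left h1 ha.le
    have h3 : a * (μ / 2 * d ^ 2) ≥ α * (μ / 2 * d ^ 2) :=
      mul_le_mul_of_nonneg_right hαa hd2
    nlinarith [h2, h3]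
  -- norm identity
  have hident : c ^ 2 = u ^ 2 - 2 * ⟪xk - xp, xs - xp⟫ + d ^ 2 := by
    have h1 : xk - xs = (xk - xp) - (xs - xp) := by abel
    have h2 : c ^ 2 = ‖(xk - xp) - (xs - xp)‖ ^ 2 := by rw [← h1]
    rw [h2, norm_sub_sq_real, norm_sub_rev xk xp, norm_sub_rev xs xp]
  have hfinal : (1 + α * μ) * d ^ 2 ≤ c ^ 2 := by
    have hδ2 : 2 * δ - 1 ≤ 0 := by have := hδ.2; linarith
    nlinarith [hI, hgrow', hident, sq_nonneg u]
  -- conclude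
  have hs0 : (0 : ℝ) ≤ 1 + α * μ := by positivity
  have := Real.sqrt_le_sqrt hfinal
  rw [show (1 + α * μ) * d ^ 2 = d ^ 2 * (1 + α * μ) by ring, Real.sqrt_mul (sq_nonneg d),
    Real.sqrt_sq (norm_nonneg _), Real.sqrt_sq (norm_nonneg _)] at this
  exact this

/-- Theorem 4.3: if the stepsizes are bounded below by `α > 0` and
either `f` or `g` is strongly convex with modulus `μ > 0`, then `S⁎ = {x⁎}` and the
iterates converge linearly: `‖xᵏ⁺¹ − x⁎‖ ≤ (1/√(1+αμ))‖xᵏ − x⁎‖ ≤ (1/√(1+αμ))ᵏ⁺¹‖x⁰ − x⁎‖`. -/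
theorem stmt12
    (f g : H → EReal) (f' : H → H)
    (hf : ProperLscConvex f) (hg : ProperLscConvex g)
    (hdom : edom g ⊆ edom f)
    (hdiff : GradOnOpenSupset f f' (edom g))
    (δ : ℝ) (hδ : δ ∈ Set.Ioo (0 : ℝ) (1 / 2))
    (x : ℕ → H) (a : ℕ → ℝ)
    (hxdom : ∀ k : ℕ, x k ∈ edom g)
    (hiter : ∀ k : ℕ, IsProxPt g (a k) (x k - a k • f' (x k)) (x (k + 1)))
    (hls : ∀ k : ℕ, a k * ‖f' (x (k + 1)) - f' (x k)‖ ≤ δ * ‖x (k + 1) - x k‖)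
    (hS : (argminSet f g).Nonempty)
    (α : ℝ) (hα : 0 < α) (hak : ∀ k : ℕ, α ≤ a k)
    (μ : ℝ) (hμ : 0 < μ)
    (hstrong : StrongConvexWith f μ ∨ StrongConvexWith g μ) :
    ∃ xs : H, argminSet f g = {xs} ∧ 1 / Real.sqrt (1 + α * μ) < 1 ∧
      ∀ k : ℕ,
        ‖x (k + 1) - xs‖ ≤ (1 / Real.sqrt (1 + α * μ)) * ‖x k - xs‖ ∧
        ‖x (k + 1) - xs‖ ≤ (1 / Real.sqrt (1 + α * μ)) ^ (k + 1) * ‖x 0 - xs‖ := by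
  obtain ⟨U, hU, hUg, hUprop⟩ := hdiff
  have hfin : ∀ x ∈ U, f x ≠ ⊤ := fun x hx => (hUprop x hx).1
  have hgrad : ∀ x ∈ U, HasGradientAt (fun y => (f y).toReal) (f' x) x :=
    fun x hx => (hUprop x hx).2
  obtain ⟨xs, hxs⟩ := hS
  have hq1 : 1 < Real.sqrt (1 + α * μ) := by
    have h := Real.sqrt_lt_sqrt zero_le_one (by nlinarith : (1 : ℝ) < 1 + α * μ)
    simpa using h
  have hqpos : 0 < Real.sqrt (1 + α * μ) := lt_trans one_pos hq1
  have step : ∀ k : ℕ, ‖x (k + 1) - xs‖ ≤ (1 / Real.sqrt (1 + α * μ)) * ‖x k - xs‖ := by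
    intro k
    have hkey := key_step hf hg hdom hU hUg hfin hgrad hδ (hxdom k) (hxdom (k + 1))
      (lt_of_lt_of_le hα (hak k)) (hiter k) (hls k) hxs hα (hak k) hμ hstrong
    rw [one_div, inv_mul_eq_div, le_div_iff₀ hqpos]
    exact hkey
  have huniq : argminSet f g = {xs} := by
    apply Set.eq_singleton_iff_unique_mem.mpr
    refine ⟨hxs, ?_⟩
    intro w hw
    have hwg : w ∈ edom g := argmin_mem_edom hf hg hdom hw
    have h1 := min_growth hf hg hdom hU hUg hfin hgrad hstrong hxs hwg
    have h2 := argmin_le_real hf hg hdom hw (argmin_mem_edom hf hg hdom hxs)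
    have h3 : μ / 2 * ‖w - xs‖ ^ 2 ≤ 0 := by linarith
    have h4 : ‖w - xs‖ ^ 2 ≤ 0 := by nlinarith
    have h5 : ‖w - xs‖ ^ 2 = 0 := le_antisymm h4 (sq_nonneg _)
    have h6 : w - xs = 0 := by
      rw [pow_eq_zero_iff (two_ne_zero)] at h5
      exact norm_eq_zero.mp h5
    exact sub_eq_zero.mp h6
  have hqnn : 0 ≤ 1 / Real.sqrt (1 + α * μ) := by positivity
  have hpow : ∀ k : ℕ, ‖x (k + 1) - xs‖ ≤ (1 / Real.sqrt (1 + α * μ)) ^ (k + 1) * ‖x 0 - xs‖ := by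
    intro k
    induction k with
    | zero => simpa using step 0
    | succ n ih =>
      calc ‖x (n + 1 + 1) - xs‖ ≤ (1 / Real.sqrt (1 + α * μ)) * ‖x (n + 1) - xs‖ := step (n + 1)
        _ ≤ (1 / Real.sqrt (1 + α * μ)) * ((1 / Real.sqrt (1 + α * μ)) ^ (n + 1) * ‖x 0 - xs‖) :=
            mul_le_mul_of_nonneg_left ih hqnn
        _ = (1 / Real.sqrt (1 + α * μ)) ^ (n + 1 + 1) * ‖x 0 - xs‖ := by ring
  exact ⟨xs, huniq, (div_lt_one hqpos).mpr hq1, fun k => ⟨step k, hpow k⟩⟩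
end
end

section
/- Let H be a real Hilbert space and let f, g : H → ℝ ∪ {+∞} satisfy Assumptions A1–A2 (f, g proper, lower semicontinuous, convex, dom g ⊆ dom f, f Fréchet differentiable on an open set containing dom g, ∇f uniformly continuous on bounded subsets of dom g and mapping bounded subsets of dom g to bounded sets). Let (x^k) and (α_k) be generated by the forward-backward method with Linesearch 1 (x⁰ ∈ dom g, σ > 0, θ ∈ (0,1), δ ∈ (0,1/2), α_k the largest α ∈ {σθⁿ : n ≥ 0} with α‖∇f(J(x^k,α)) − ∇f(x^k)‖ ≤ δ‖J(x^k,α) − x^k‖, x^{k+1} = J(x^k, α_k)), and suppose f+g has a minimizer. Then liminf_{k→∞} √k·‖x^k − J(x^k, α_k)‖ = 0. -/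
open Set Filter Topology Bornology RealInnerProductSpace

noncomputable section

variable {H : Type*} [NormedAddCommGroup H] [InnerProductSpace ℝ H] [CompleteSpace H]

/-! ### Auxiliary lemmas -/

lemma ereal_lt_top_of_add_coe_lt {x : EReal} {r : ℝ} (h : x + (r : EReal) < ⊤) : x < ⊤ := by
  by_contra h'
  push_neg at h'
  rw [top_le_iff] at h'
  simp [h'] at h

lemma ereal_lt_top_left_of_add_lt_top {a b : EReal} (hb : b ≠ ⊥) (h : a + b < ⊤) : a < ⊤ := by
  by_contra h'
  push_neg at h'
  rw [top_le_iff] at h'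
  rw [h', EReal.top_add_of_ne_bot hb] at h
  exact lt_irrefl _ h

/-- Real-valued convexity inequality extracted from `ProperLscConvex`. -/
lemma plc_real_convex {h : H → EReal} (hh : ProperLscConvex h) {x y : H}
    (hx : h x < ⊤) (hy : h y < ⊤) {a b : ℝ} (ha : 0 ≤ a) (hb : 0 ≤ b) (hab : a + b = 1) :
    h (a • x + b • y) < ⊤ ∧
      (h (a • x + b • y)).toReal ≤ a * (h x).toReal + b * (h y).toReal := by
  obtain ⟨-, hbot, -, hcvx⟩ := hh
  have hc := hcvx x y a b ha hb hab
  have hx' : h x = ((h x).toReal : EReal) := (EReal.coe_toReal hx.ne (hbot x).ne').symm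
  have hy' : h y = ((h y).toReal : EReal) := (EReal.coe_toReal hy.ne (hbot y).ne').symm
  rw [hx', hy', ← EReal.coe_mul, ← EReal.coe_mul, ← EReal.coe_add] at hc
  have hlt : h (a • x + b • y) < ⊤ := lt_of_le_of_lt hc (EReal.coe_lt_top _)
  refine ⟨hlt, ?_⟩
  have := EReal.toReal_le_toReal hc (hbot _).ne' (EReal.coe_ne_top _)
  simpa only [EReal.toReal_coe] using this

/-- Gradient inequality for a convex (along the segment) differentiable function. -/
lemma grad_ineq_of_segment {f : H → ℝ} {x1 x2 gx : H} (hgrad : HasGradientAt f gx x1)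
    (hcvx : ∀ t : ℝ, t ∈ Set.Ioc (0 : ℝ) 1 →
      f (x1 + t • (x2 - x1)) ≤ f x1 + t * (f x2 - f x1)) :
    f x1 + ⟪gx, x2 - x1⟫ ≤ f x2 := by
  set d := x2 - x1 with hd
  have hD : HasDerivAt (fun t : ℝ => f (x1 + t • d)) ⟪gx, d⟫ 0 := by
    have h1 : HasFDerivAt f ((InnerProductSpace.toDual ℝ H) gx) ((0 : ℝ) • d + x1) := by
      simpa using hgrad.hasFDerivAt
    have hl : HasDerivAt (fun t : ℝ => t • d + x1) d 0 := by
      simpa using ((hasDerivAt_id (0 : ℝ)).smul_const d).add_const x1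
    have h2 := h1.comp_hasDerivAt 0 hl
    simp only [InnerProductSpace.toDual_apply_apply, Function.comp_def] at h2
    simpa [add_comm] using h2
  set φ : ℝ → ℝ := fun t => f (x1 + t • d) with hφ
  have hslope : Filter.Tendsto (slope φ 0) (𝓝[>] 0) (𝓝 ⟪gx, d⟫) :=
    (hasDerivAt_iff_tendsto_slope.mp hD).mono_left
      (nhdsWithin_mono 0 (fun t ht => ne_of_gt ht))
  have hbound : ∀ᶠ t in 𝓝[>] (0 : ℝ), slope φ 0 t ≤ f x2 - f x1 := by
    filter_upwards [Ioc_mem_nhdsGT_of_mem (by norm_num : (0 : ℝ) ∈ Set.Ico (0 : ℝ) 1)]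
      with t ht
    have ht0 : 0 < t := ht.1
    have := hcvx t ht
    have hφ0 : φ 0 = f x1 := by simp [hφ]
    rw [slope_def_field, sub_zero, div_le_iff₀ ht0, hφ0]
    simp only [hφ]
    calc f (x1 + t • d) - f x1 ≤ t * (f x2 - f x1) := by linarith
      _ = (f x2 - f x1) * t := by ring
  have h0 : ⟪gx, d⟫ ≤ f x2 - f x1 := le_of_tendsto hslope hbound
  linarith

/-- Variational inequality for the proximal point. -/
lemma prox_vi {g : H → EReal} (hg : ProperLscConvex g) {α : ℝ} (hα : 0 < α) {z p y : H}
    (hp : IsProxPt g α z p) (hy : g y < ⊤) (hpt : g p < ⊤) :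
    ⟪z - p, y - p⟫ ≤ α * ((g y).toReal - (g p).toReal) := by
  have hbot := hg.2.1
  set c : ℝ := 1 / (2 * α) with hc
  have hcpos : 0 < c := by positivity
  set Gp := (g p).toReal with hGp
  set Gy := (g y).toReal with hGy
  have key : ∀ t : ℝ, t ∈ Set.Ioc (0 : ℝ) 1 →
      Gp - Gy ≤ 2 * c * ⟪p - z, y - p⟫ + t * (c * ‖y - p‖ ^ 2) := by
    intro t ht
    obtain ⟨ht0, ht1⟩ := ht
    have hcomb := plc_real_convex hg hpt hy (by linarith : (0:ℝ) ≤ 1 - t) ht0.le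
      (by ring : (1 - t) + t = 1)
    set q : H := (1 - t) • p + t • y with hq
    have hqeq : q = p + t • (y - p) := by
      simp only [hq, smul_sub, sub_smul, one_smul]; abel
    have hineq := hp q
    -- convert to reals
    have hgq' : g q = ((g q).toReal : EReal) :=
      (EReal.coe_toReal hcomb.1.ne (hbot q).ne').symm
    have hgp' : g p = (Gp : EReal) := (EReal.coe_toReal hpt.ne (hbot p).ne').symm
    rw [hgq', hgp', ← EReal.coe_add, ← EReal.coe_add, EReal.coe_le_coe_iff] at hineq
    have hGq : (g q).toReal ≤ (1 - t) * Gp + t * Gy := hcomb.2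
    have hnorm : ‖q - z‖ ^ 2 = ‖p - z‖ ^ 2 + 2 * (t * ⟪p - z, y - p⟫) + t ^ 2 * ‖y - p‖ ^ 2 := by
      have : q - z = (p - z) + t • (y - p) := by rw [hqeq]; abel
      rw [this, norm_add_sq_real, real_inner_smul_right, norm_smul]
      have : ‖t‖ = t := by rw [Real.norm_eq_abs, abs_of_pos ht0]
      rw [this]; ring
    rw [hnorm] at hineq
    have h1 : t * (Gp - Gy) ≤ c * (2 * (t * ⟪p - z, y - p⟫) + t ^ 2 * ‖y - p‖ ^ 2) := by
      nlinarith [hineq, hGq]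
    have h2 : Gp - Gy ≤ c * (2 * ⟪p - z, y - p⟫ + t * ‖y - p‖ ^ 2) := by
      rw [← mul_le_mul_iff_right₀ ht0]
      calc t * (Gp - Gy) ≤ c * (2 * (t * ⟪p - z, y - p⟫) + t ^ 2 * ‖y - p‖ ^ 2) := h1
        _ = t * (c * (2 * ⟪p - z, y - p⟫ + t * ‖y - p‖ ^ 2)) := by ring
    calc Gp - Gy ≤ c * (2 * ⟪p - z, y - p⟫ + t * ‖y - p‖ ^ 2) := h2
      _ = 2 * c * ⟪p - z, y - p⟫ + t * (c * ‖y - p‖ ^ 2) := by ring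
  -- let t → 0 along 1/(n+1)
  have hlim : Gp - Gy ≤ 2 * c * ⟪p - z, y - p⟫ := by
    have htend : Filter.Tendsto
        (fun n : ℕ => 2 * c * ⟪p - z, y - p⟫ + (1 / ((n : ℝ) + 1)) * (c * ‖y - p‖ ^ 2))
        Filter.atTop (𝓝 (2 * c * ⟪p - z, y - p⟫)) := by
      have := tendsto_one_div_add_atTop_nhds_zero_nat.mul_const (c * ‖y - p‖ ^ 2)
      have := (tendsto_const_nhds (x := 2 * c * ⟪p - z, y - p⟫)
        (f := Filter.atTop (α := ℕ))).add this
      simpa using this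
    refine ge_of_tendsto' htend fun n => ?_
    exact key (1 / ((n : ℝ) + 1)) ⟨by positivity, by
      rw [div_le_one (by positivity)]; linarith [Nat.cast_nonneg (α := ℝ) n]⟩
  have hc2 : 2 * c = 1 / α := by rw [hc]; field_simp
  have : α * (Gp - Gy) ≤ ⟪p - z, y - p⟫ := by
    rw [hc2] at hlim
    rw [← mul_le_mul_iff_right₀ (show (0:ℝ) < 1/α by positivity)]
    calc (1/α) * (α * (Gp - Gy)) = Gp - Gy := by field_simp
      _ ≤ 1 / α * ⟪p - z, y - p⟫ := hlim
  have hneg : ⟪z - p, y - p⟫ = -⟪p - z, y - p⟫ := by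
    rw [show z - p = -(p - z) by abel, inner_neg_left]
  rw [hneg]
  linarith

/-- Theorem 4.4: for Method 1 with Linesearch 1, if `f+g` has a
minimizer then `liminf √k·‖xᵏ − J(xᵏ,αₖ)‖ = 0`. -/
theorem stmt13
    (f g : H → EReal) (f' : H → H) (prox : ℝ → H → H)
    (hf : ProperLscConvex f) (hg : ProperLscConvex g)
    (hdom : edom g ⊆ edom f)
    (hdiff : GradOnOpenSupset f f' (edom g))
    (hA2 : UCBddOnBounded g f')
    (hprox : ∀ α : ℝ, 0 < α → ∀ z : H, IsProxPt g α z (prox α z))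
    (J : H → ℝ → H) (hJ : ∀ (x : H) (α : ℝ), J x α = prox α (x - α • f' x))
    (σ θ δ : ℝ) (hσ : 0 < σ) (hθ : θ ∈ Set.Ioo (0 : ℝ) 1)
    (hδ : δ ∈ Set.Ioo (0 : ℝ) (1 / 2))
    (x : ℕ → H) (a : ℕ → ℝ)
    (hx0 : x 0 ∈ edom g)
    (hls : ∀ k : ℕ, LS1Step f' J δ σ θ (x k) (a k))
    (hiter : ∀ k : ℕ, x (k + 1) = J (x k) (a k))
    (hS : (argminSet f g).Nonempty) :
    Filter.liminf (fun k : ℕ => Real.sqrt k * ‖x k - J (x k) (a k)‖) atTop = 0 := by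
  classical
  obtain ⟨xs, hxs⟩ := hS
  obtain ⟨U, hUopen, hsubU, hU⟩ := hdiff
  have hfbot := hf.2.1
  have hgbot := hg.2.1
  set F : H → ℝ := fun z => (f z).toReal with hF
  set G : H → ℝ := fun z => (g z).toReal with hG
  have hθ0 := hθ.1
  have hα : ∀ k, 0 < a k := by
    intro k
    obtain ⟨n, hn, -, -⟩ := hls k
    rw [hn]; positivity
  -- all iterates stay in the domain of g
  have hgx : ∀ k, g (x k) < ⊤ := by
    intro k
    induction k with
    | zero => exact hx0
    | succ k ih =>
      have hpp : IsProxPt g (a k) (x k - a k • f' (x k)) (x (k + 1)) := by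
        rw [hiter k, hJ]
        exact hprox (a k) (hα k) _
      have h1 := hpp (x k)
      have h2 : g (x k) +
          ((1 / (2 * a k) * ‖x k - (x k - a k • f' (x k))‖ ^ 2 : ℝ) : EReal) < ⊤ :=
        EReal.add_lt_top ih.ne (EReal.coe_lt_top _).ne
      exact ereal_lt_top_of_add_coe_lt (lt_of_le_of_lt h1 h2)
  -- finiteness at the minimizer
  have hfgx0 : f (x 0) + g (x 0) < ⊤ := EReal.add_lt_top (hdom hx0).ne hx0.ne
  have hsum_xs : f xs + g xs < ⊤ := lt_of_le_of_lt (hxs (x 0)) hfgx0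
  have hgxs : g xs < ⊤ :=
    ereal_lt_top_left_of_add_lt_top (hfbot xs).ne' (by rwa [add_comm] at hsum_xs)
  have hfxs : f xs < ⊤ := ereal_lt_top_left_of_add_lt_top (hgbot xs).ne' hsum_xs
  -- real-valued minimizer inequality
  have hmin : ∀ p : H, g p < ⊤ → F xs + G xs ≤ F p + G p := by
    intro p hp
    have hfp : f p < ⊤ := hdom hp
    have h := hxs p
    rw [show f xs = ((F xs : ℝ) : EReal) from (EReal.coe_toReal hfxs.ne (hfbot xs).ne').symm,
      show g xs = ((G xs : ℝ) : EReal) from (EReal.coe_toReal hgxs.ne (hgbot xs).ne').symm,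
      show f p = ((F p : ℝ) : EReal) from (EReal.coe_toReal hfp.ne (hfbot p).ne').symm,
      show g p = ((G p : ℝ) : EReal) from (EReal.coe_toReal hp.ne (hgbot p).ne').symm,
      ← EReal.coe_add, ← EReal.coe_add, EReal.coe_le_coe_iff] at h
    exact h
  -- gradient inequality on the domain of g
  have hgi : ∀ x1 x2 : H, g x1 < ⊤ → g x2 < ⊤ → F x1 + ⟪f' x1, x2 - x1⟫ ≤ F x2 := by
    intro x1 x2 h1 h2
    have hgrad := (hU x1 (hsubU h1)).2
    apply grad_ineq_of_segment hgrad
    intro t ht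
    have hcomb := plc_real_convex hf (hdom h1) (hdom h2)
      (by linarith [ht.2] : (0 : ℝ) ≤ 1 - t) ht.1.le (by ring)
    have hpt : x1 + t • (x2 - x1) = (1 - t) • x1 + t • x2 := by
      rw [smul_sub, sub_smul, one_smul]; abel
    rw [hpt]
    calc (f ((1 - t) • x1 + t • x2)).toReal ≤ (1 - t) * F x1 + t * F x2 := hcomb.2
      _ = F x1 + t * (F x2 - F x1) := by ring
  -- the key Fejér-type inequality
  have key : ∀ k, ‖x (k + 1) - xs‖ ^ 2 ≤
      ‖x k - xs‖ ^ 2 - (1 - 2 * δ) * ‖x k - x (k + 1)‖ ^ 2 := by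
    intro k
    set s := x k with hs
    set p := x (k + 1) with hp
    set α := a k with hαdef
    have hαk : 0 < α := hα k
    have hgs : g s < ⊤ := hgx k
    have hgp : g p < ⊤ := hgx (k + 1)
    set z : H := s - α • f' s with hz
    have hpp : IsProxPt g α z p := by rw [hp, hiter k, hJ]; exact hprox α hαk _
    have hVI := prox_vi hg hαk hpp hgxs hgp
    have hz_expand : ⟪z - p, xs - p⟫ = ⟪s - p, xs - p⟫ - α * ⟪f' s, xs - p⟫ := by
      rw [hz, show s - α • f' s - p = (s - p) - α • f' s by abel, inner_sub_left,
        real_inner_smul_left]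
    have hsplit1 : ⟪f' s, xs - p⟫ = ⟪f' s, xs - s⟫ + ⟪f' s, s - p⟫ := by
      rw [← inner_add_right]
      congr 1; abel
    have hsplit2 : ⟪f' s, s - p⟫ = ⟪f' p, s - p⟫ + ⟪f' s - f' p, s - p⟫ := by
      rw [inner_sub_left]; ring
    have hg1 : ⟪f' s, xs - s⟫ ≤ F xs - F s := by have := hgi s xs hgs hgxs; linarith
    have hg2 : ⟪f' p, s - p⟫ ≤ F s - F p := by have := hgi p s hgp hgs; linarith
    have hLS : α * ‖f' p - f' s‖ ≤ δ * ‖p - s‖ := by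
      obtain ⟨n, -, hls1, -⟩ := hls k
      unfold LS1 at hls1
      rw [← hiter k] at hls1
      exact hls1
    have hcs : ⟪f' s - f' p, s - p⟫ ≤ ‖f' s - f' p‖ * ‖s - p‖ := real_inner_le_norm _ _
    have hcs2 : α * ⟪f' s - f' p, s - p⟫ ≤ δ * ‖p - s‖ ^ 2 := by
      have e1 : ‖f' s - f' p‖ = ‖f' p - f' s‖ := norm_sub_rev _ _
      have e2 : ‖s - p‖ = ‖p - s‖ := norm_sub_rev _ _
      calc α * ⟪f' s - f' p, s - p⟫ ≤ α * (‖f' s - f' p‖ * ‖s - p‖) :=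
            mul_le_mul_of_nonneg_left hcs hαk.le
        _ = (α * ‖f' p - f' s‖) * ‖p - s‖ := by rw [e1, e2]; ring
        _ ≤ (δ * ‖p - s‖) * ‖p - s‖ := mul_le_mul_of_nonneg_right hLS (norm_nonneg _)
        _ = δ * ‖p - s‖ ^ 2 := by ring
    have hminp := hmin p hgp
    -- upper bound on the cross term
    have hmain : ⟪s - p, xs - p⟫ ≤ δ * ‖p - s‖ ^ 2 := by
      have hVI' : ⟪s - p, xs - p⟫ ≤ α * ⟪f' s, xs - p⟫ + α * (G xs - G p) := by
        rw [hz_expand] at hVI; linarith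
      have hbound : α * ⟪f' s, xs - p⟫ ≤
          α * ((F xs - F s) + (F s - F p)) + δ * ‖p - s‖ ^ 2 := by
        rw [hsplit1, hsplit2]
        have h1 : ⟪f' s, xs - s⟫ + ⟪f' p, s - p⟫ ≤ (F xs - F s) + (F s - F p) := by linarith
        nlinarith [mul_le_mul_of_nonneg_left h1 hαk.le, hcs2]
      have : α * ((F xs - F s) + (F s - F p)) + α * (G xs - G p) ≤ 0 := by
        have h2 : (F xs + G xs) - (F p + G p) ≤ 0 := by linarith
        nlinarith [mul_nonpos_of_nonneg_of_nonpos hαk.le h2]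
      linarith
    -- the norm identity
    have hid : ‖p - xs‖ ^ 2 = ‖s - xs‖ ^ 2 - ‖s - p‖ ^ 2 + 2 * ⟪s - p, xs - p⟫ := by
      have e1 : p - xs = (s - xs) - (s - p) := by abel
      rw [e1, norm_sub_sq_real]
      have e2 : (s - xs : H) = (s - p) + (p - xs) := by abel
      rw [show ⟪s - xs, s - p⟫ = ⟪(s - p) + (p - xs), s - p⟫ by rw [← e2]]
      rw [inner_add_left, real_inner_self_eq_norm_sq]
      have e3 : ⟪p - xs, s - p⟫ = -⟪s - p, xs - p⟫ := by
        rw [show (p - xs : H) = -(xs - p) by abel, inner_neg_left, real_inner_comm]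
      rw [e3]; ring
    have e4 : ‖p - s‖ = ‖s - p‖ := norm_sub_rev _ _
    calc ‖p - xs‖ ^ 2 = ‖s - xs‖ ^ 2 - ‖s - p‖ ^ 2 + 2 * ⟪s - p, xs - p⟫ := hid
      _ ≤ ‖s - xs‖ ^ 2 - ‖s - p‖ ^ 2 + 2 * (δ * ‖p - s‖ ^ 2) := by linarith
      _ = ‖s - xs‖ ^ 2 - (1 - 2 * δ) * ‖s - p‖ ^ 2 := by rw [e4]; ring
  -- summability of the squared displacements
  set D : ℕ → ℝ := fun k => ‖x k - x (k + 1)‖ ^ 2 with hD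
  set E : ℕ → ℝ := fun k => ‖x k - xs‖ ^ 2 with hE
  have hδ1 : 0 < 1 - 2 * δ := by have := hδ.2; linarith
  have hsumle : ∀ N, ∑ k ∈ Finset.range N, (1 - 2 * δ) * D k ≤ E 0 := by
    intro N
    have h1 : ∑ k ∈ Finset.range N, (1 - 2 * δ) * D k ≤
        ∑ k ∈ Finset.range N, (E k - E (k + 1)) :=
      Finset.sum_le_sum (fun k _ => by
        have := key k
        simp only [hD, hE]
        linarith)
    rw [Finset.sum_range_sub' E N] at h1
    have h2 : 0 ≤ E N := sq_nonneg _
    linarith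
  have hDsummable : Summable D := by
    have h1 : Summable (fun k => (1 - 2 * δ) * D k) :=
      summable_of_sum_range_le
        (fun n => mul_nonneg hδ1.le (sq_nonneg _)) hsumle
    have h2 := h1.mul_left (1 - 2 * δ)⁻¹
    have h3 : (fun k => (1 - 2 * δ)⁻¹ * ((1 - 2 * δ) * D k)) = D := by
      funext k; field_simp
    rwa [h3] at h2
  -- rewrite the goal via the iteration
  have hrw : (fun k : ℕ => Real.sqrt k * ‖x k - J (x k) (a k)‖) =
      fun k : ℕ => Real.sqrt k * ‖x k - x (k + 1)‖ := by
    funext k; rw [← hiter k]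
  rw [hrw]
  set u : ℕ → ℝ := fun k => Real.sqrt k * ‖x k - x (k + 1)‖ with hu
  have hu0 : ∀ k, 0 ≤ u k := fun k => mul_nonneg (Real.sqrt_nonneg _) (norm_nonneg _)
  -- frequently small
  have hfreq : ∀ ε : ℝ, 0 < ε → ∃ᶠ k in atTop, u k ≤ ε := by
    intro ε hε
    by_contra hcon
    rw [Filter.not_frequently] at hcon
    obtain ⟨N, hN⟩ := Filter.eventually_atTop.mp hcon
    have hbig : ∀ m : ℕ, ε ^ 2 / ((m + (N + 1) : ℕ) : ℝ) ≤ D (m + (N + 1)) := by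
      intro m
      set k := m + (N + 1) with hk
      have hkN : N ≤ k := by omega
      have hk1 : 1 ≤ k := by omega
      have hkpos : (0 : ℝ) < (k : ℝ) := by exact_mod_cast hk1
      have hεlt : ε < Real.sqrt k * ‖x k - x (k + 1)‖ := not_le.mp (hN k hkN)
      have hsq : ε ^ 2 < (Real.sqrt k * ‖x k - x (k + 1)‖) ^ 2 :=
        pow_lt_pow_left₀ hεlt hε.le (by norm_num)
      rw [mul_pow, Real.sq_sqrt (Nat.cast_nonneg k)] at hsq
      rw [div_le_iff₀ hkpos]
      simp only [hD]
      nlinarith [hsq]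
    have hsum2 : Summable (fun m : ℕ => ε ^ 2 / ((m + (N + 1) : ℕ) : ℝ)) :=
      Summable.of_nonneg_of_le (fun m => by positivity) hbig
        ((summable_nat_add_iff (N + 1)).mpr hDsummable)
    have hsum3 : Summable (fun k : ℕ => ε ^ 2 / (k : ℝ)) :=
      (summable_nat_add_iff (N + 1)).mp hsum2
    have hsum4 : Summable (fun k : ℕ => 1 / (k : ℝ)) := by
      have h5 := hsum3.mul_left (ε ^ 2)⁻¹
      have h6 : (fun k : ℕ => (ε ^ 2)⁻¹ * (ε ^ 2 / (k : ℝ))) =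
          fun k : ℕ => 1 / (k : ℝ) := by
        funext k
        field_simp
      rwa [h6] at h5
    exact Real.not_summable_one_div_natCast hsum4
  refine le_antisymm ?_ ?_
  · apply le_of_forall_pos_le_add
    intro ε hε
    have h7 := Filter.liminf_le_of_frequently_le (hfreq ε hε)
      (Filter.isBoundedUnder_of ⟨0, fun k => hu0 k⟩)
    linarith
  · exact Filter.le_liminf_of_le
      (Filter.IsCoboundedUnder.of_frequently_le (hfreq 1 one_pos))
      (Filter.Eventually.of_forall hu0)
end
end

section
/- Let H be a real Hilbert space, f, g : H → ℝ ∪ {+∞} proper, lower semicontinuous, convex with dom g ⊆ dom f, f Fréchet differentiable on an open set containing dom g, δ ∈ (0, 1/2). Let ỹ^k ∈ dom g, α_k > 0, x^{k+1} = prox_{α_k g}(ỹ^k − α_k ∇f(ỹ^k)), and suppose α_k‖∇f(x^{k+1}) − ∇f(ỹ^k)‖ ≤ δ‖x^{k+1} − ỹ^k‖. Assume additionally ỹ^k = P_Ω(y^k) is the metric projection of some y^k ∈ H onto the closed convex set Ω := dom g. Then for every x ∈ dom g: (f+g)(x) − (f+g)(x^{k+1}) ≥ (1/(2α_k))·(‖x^{k+1}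 − x‖² − ‖y^k − x‖²). -/
open Set Filter Topology Bornology RealInnerProductSpace

noncomputable section

variable {H : Type*} [NormedAddCommGroup H] [InnerProductSpace ℝ H] [CompleteSpace H]

-- small-t lemma
lemma small_t {a K : ℝ} (hK : 0 ≤ K) (h : ∀ t : ℝ, t ∈ Set.Ioc (0:ℝ) 1 → a ≤ t * K) :
    a ≤ 0 := by
  have ht : Tendsto (fun t : ℝ => t * K) (𝓝[>] (0:ℝ)) (𝓝 0) := by
    have : Tendsto (fun t : ℝ => t * K) (𝓝 (0:ℝ)) (𝓝 (0 * K)) :=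
      (continuous_id.mul continuous_const).tendsto 0
    simpa using this.mono_left nhdsWithin_le_nhds
  refine ge_of_tendsto ht ?_
  filter_upwards [Ioc_mem_nhdsGT_of_mem (by constructor <;> norm_num : (0:ℝ) ∈ Set.Ico (0:ℝ) 1)]
    with t htt using h t htt

-- convex combination bound in EReal
lemma plc_combo {h : H → EReal} (hh : ProperLscConvex h) {x y : H}
    (hx : h x ≠ ⊤) (hy : h y ≠ ⊤) {t : ℝ} (ht0 : 0 ≤ t) (ht1 : t ≤ 1) :
    h ((1-t) • x + t • y) ≤ (((1-t) * (h x).toReal + t * (h y).toReal : ℝ) : EReal) := by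
  have hb := hh.2.1
  have h1 := hh.2.2.2 x y (1-t) t (by linarith) ht0 (by ring)
  rw [← EReal.coe_toReal hx (hb x).ne', ← EReal.coe_toReal hy (hb y).ne'] at h1
  refine le_trans h1 (le_of_eq ?_)
  norm_cast

lemma plc_combo_real {h : H → EReal} (hh : ProperLscConvex h) {x y : H}
    (hx : h x ≠ ⊤) (hy : h y ≠ ⊤) {t : ℝ} (ht0 : 0 ≤ t) (ht1 : t ≤ 1) :
    (h ((1-t) • x + t • y)).toReal ≤ (1-t) * (h x).toReal + t * (h y).toReal := by
  have h2 := EReal.toReal_le_toReal (plc_combo hh hx hy ht0 ht1) (hh.2.1 _).ne' (EReal.coe_ne_top _)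
  simpa only [EReal.toReal_coe] using h2

lemma plc_combo_ne_top {h : H → EReal} (hh : ProperLscConvex h) {x y : H}
    (hx : h x ≠ ⊤) (hy : h y ≠ ⊤) {t : ℝ} (ht0 : 0 ≤ t) (ht1 : t ≤ 1) :
    h ((1-t) • x + t • y) ≠ ⊤ :=
  ((plc_combo hh hx hy ht0 ht1).trans_lt (EReal.coe_lt_top _)).ne

-- gradient inequality for convex f
lemma grad_ineq {f : H → EReal} (hf : ProperLscConvex f) {f' : H → H} {w z : H}
    (hw : HasGradientAt (fun y => (f y).toReal) (f' w) w)
    (hwt : f w ≠ ⊤) (hzt : f z ≠ ⊤) :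
    ⟪f' w, z - w⟫ ≤ (f z).toReal - (f w).toReal := by
  set F : H → ℝ := fun y => (f y).toReal with hF
  set φ : ℝ → H := fun t => w + t • (z - w) with hφ
  have hkey : ∀ t ∈ Set.Ioc (0:ℝ) 1, slope (F ∘ φ) 0 t ≤ F z - F w := by
    intro t ht
    have heq : φ t = (1-t) • w + t • z := by
      simp only [hφ, smul_sub, sub_smul, one_smul]; abel
    have hcombo := plc_combo_real hf hwt hzt ht.1.le ht.2
    rw [← heq] at hcombo
    have : slope (F ∘ φ) 0 t = (F (φ t) - F (φ 0)) / t := by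
      simp [slope, Function.comp, div_eq_inv_mul]
    rw [this]
    have hφ0 : φ 0 = w := by simp [hφ]
    rw [hφ0, div_le_iff₀ ht.1]
    nlinarith [hcombo]
  have hd : HasDerivAt (F ∘ φ) (⟪f' w, z - w⟫) 0 := by
    have h1 : HasDerivAt φ (z - w) 0 := by
      convert ((hasDerivAt_id (0:ℝ)).smul_const (z - w)).const_add w using 1 <;> simp [hφ]
    have hφ0 : φ 0 = w := by simp [hφ]
    have h2 := hw.hasFDerivAt
    rw [← hφ0] at h2
    have h3 := h2.comp_hasDerivAt 0 h1
    have h4 : f' (φ 0) = f' w := by rw [hφ0]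
    simpa [InnerProductSpace.toDual_apply_apply, h4] using h3
  have hts := hasDerivAt_iff_tendsto_slope.mp hd
  have hts' : Tendsto (slope (F ∘ φ) 0) (𝓝[>] (0:ℝ)) (𝓝 (⟪f' w, z - w⟫)) :=
    hts.mono_left (nhdsWithin_mono 0 (fun x hx => ne_of_gt hx))
  refine le_of_tendsto hts' ?_
  filter_upwards [Ioc_mem_nhdsGT_of_mem (by constructor <;> norm_num : (0:ℝ) ∈ Set.Ico (0:ℝ) 1)]
    with t htt using hkey t htt



set_option maxHeartbeats 1000000 in
/-- Proposition 4.3: for the accelerated step, with `ỹ = P_Ω(y)` the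
metric projection of `y` onto `Ω = dom g` (assumed closed), `x⁺ = prox_{αg}(ỹ − α∇f(ỹ))`
and the linesearch inequality, one has for every `x ∈ dom g`:
`(f+g)(x) − (f+g)(x⁺) ≥ (1/(2α))(‖x⁺ − x‖² − ‖y − x‖²)`. -/
theorem stmt14
    (f g : H → EReal) (f' : H → H)
    (hf : ProperLscConvex f) (hg : ProperLscConvex g)
    (hdom : edom g ⊆ edom f)
    (hdiff : GradOnOpenSupset f f' (edom g))
    (hclosed : IsClosed (edom g))
    (δ : ℝ) (hδ : δ ∈ Set.Ioo (0 : ℝ) (1 / 2))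
    (yk tyk : H) (htyk : tyk ∈ edom g)
    (hproj : ∀ w ∈ edom g, ‖yk - tyk‖ ≤ ‖yk - w‖)
    (αk : ℝ) (hαk : 0 < αk)
    (xk1 : H) (hxk1 : IsProxPt g αk (tyk - αk • f' tyk) xk1)
    (hls : αk * ‖f' xk1 - f' tyk‖ ≤ δ * ‖xk1 - tyk‖) :
    ∀ x ∈ edom g,
      (((1 / (2 * αk)) * (‖xk1 - x‖ ^ 2 - ‖yk - x‖ ^ 2) : ℝ) : EReal)
        ≤ (f x + g x) - (f xk1 + g xk1) := by
  intro x hx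
  obtain ⟨U, hUopen, hsub, hU⟩ := hdiff
  have hbg := hg.2.1
  have hbf := hf.2.1
  have hgx : g x ≠ ⊤ := LT.lt.ne hx
  have hgty : g tyk ≠ ⊤ := LT.lt.ne htyk
  have hfx : f x ≠ ⊤ := LT.lt.ne (hdom hx)
  have hfty : f tyk ≠ ⊤ := LT.lt.ne (hdom htyk)
  set z : H := tyk - αk • f' tyk with hzdef
  -- xk1 ∈ dom g
  have hgp : g xk1 ≠ ⊤ := by
    intro htop
    have h1 := hxk1 tyk
    have h2 : g tyk + (((1 / (2 * αk)) * ‖tyk - z‖ ^ 2 : ℝ) : EReal) < ⊤ :=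
      EReal.add_lt_top hgty (EReal.coe_ne_top _)
    rw [htop, EReal.top_add_coe] at h1
    exact absurd (top_le_iff.mp h1) h2.ne
  have hxk1mem : xk1 ∈ edom g := lt_top_iff_ne_top.mpr hgp
  have hfp : f xk1 ≠ ⊤ := LT.lt.ne (hdom hxk1mem)
  have hgradty := (hU tyk (hsub htyk)).2
  have hgradp := (hU xk1 (hsub hxk1mem)).2
  set Fx := (f x).toReal
  set Fty := (f tyk).toReal
  set Fp := (f xk1).toReal
  set Gx := (g x).toReal
  set Gp := (g xk1).toReal
  have hc : (0:ℝ) < 1 / (2 * αk) := by positivity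
  -- gradient inequalities
  have A1 : ⟪f' tyk, x - tyk⟫ ≤ Fx - Fty := grad_ineq hf hgradty hfty hfx
  have A2 : ⟪f' xk1, tyk - xk1⟫ ≤ Fty - Fp := grad_ineq hf hgradp hfp hfty
  -- prox inequality in reals
  have hprox_real : ∀ y : H, g y ≠ ⊤ →
      Gp + (1 / (2 * αk)) * ‖xk1 - z‖ ^ 2 ≤ (g y).toReal + (1 / (2 * αk)) * ‖y - z‖ ^ 2 := by
    intro y hy
    have h1 := hxk1 y
    rw [← EReal.coe_toReal hgp (hbg _).ne', ← EReal.coe_toReal hy (hbg _).ne'] at h1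
    exact_mod_cast h1
  -- three-point inequality
  have hthree : Gp - Gx + (1 / αk) * ⟪z - xk1, x - xk1⟫ ≤ 0 := by
    refine small_t (K := (1 / (2 * αk)) * ‖x - xk1‖ ^ 2) (by positivity) ?_
    intro t ht
    set yt : H := (1 - t) • xk1 + t • x with hytdef
    have hyt_top : g yt ≠ ⊤ := plc_combo_ne_top hg hgp hgx ht.1.le ht.2
    have h1 := hprox_real yt hyt_top
    have h2 := plc_combo_real hg hgp hgx ht.1.le ht.2
    have hyw : yt - z = (xk1 - z) + t • (x - xk1) := by
      rw [hytdef]; module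
    have hexp : ‖yt - z‖ ^ 2
        = ‖xk1 - z‖ ^ 2 + 2 * t * ⟪xk1 - z, x - xk1⟫ + t ^ 2 * ‖x - xk1‖ ^ 2 := by
      rw [hyw, norm_add_sq_real, real_inner_smul_right, norm_smul, Real.norm_eq_abs,
        mul_pow, sq_abs]
      ring
    have hiz : ⟪z - xk1, x - xk1⟫ = -⟪xk1 - z, x - xk1⟫ := by
      rw [← inner_neg_left, neg_sub]
    have h2c : (1 : ℝ) / αk = 2 * (1 / (2 * αk)) := by field_simp
    rw [hexp] at h1
    have hta : t * (Gp - Gx + (1 / αk) * ⟪z - xk1, x - xk1⟫)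
        ≤ t * (t * ((1 / (2 * αk)) * ‖x - xk1‖ ^ 2)) := by
      rw [hiz, h2c]
      nlinarith [h1, h2]
    exact le_of_mul_le_mul_left hta ht.1
  have hinnerz : ⟪z - xk1, x - xk1⟫
      = ⟪tyk - xk1, x - xk1⟫ - αk * ⟪f' tyk, x - xk1⟫ := by
    have hzz : z - xk1 = (tyk - xk1) - αk • (f' tyk) := by rw [hzdef]; module
    rw [hzz, inner_sub_left, real_inner_smul_left]
  have hthree' : 2 * (1 / (2 * αk)) * ⟪tyk - xk1, x - xk1⟫ - ⟪f' tyk, x - xk1⟫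
      ≤ Gx - Gp := by
    rw [hinnerz] at hthree
    have hsimp : (1 / αk) * (⟪tyk - xk1, x - xk1⟫ - αk * ⟪f' tyk, x - xk1⟫)
        = 2 * (1 / (2 * αk)) * ⟪tyk - xk1, x - xk1⟫ - ⟪f' tyk, x - xk1⟫ := by
      field_simp
    linarith [hsimp ▸ hthree]
  -- projection inequality
  have hprojineq : ‖tyk - x‖ ^ 2 ≤ ‖yk - x‖ ^ 2 := by
    have hva : 2 * ⟪yk - tyk, x - tyk⟫ ≤ 0 := by
      refine small_t (K := ‖x - tyk‖ ^ 2) (sq_nonneg _) ?_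
      intro t ht
      set wt : H := (1 - t) • tyk + t • x with hwtdef
      have hwt : wt ∈ edom g :=
        lt_top_iff_ne_top.mpr (plc_combo_ne_top hg hgty hgx ht.1.le ht.2)
      have h1 := hproj wt hwt
      have h1' : ‖yk - tyk‖ ^ 2 ≤ ‖yk - wt‖ ^ 2 := by
        nlinarith [norm_nonneg (yk - tyk), norm_nonneg (yk - wt)]
      have hyw : yk - wt = (yk - tyk) - t • (x - tyk) := by rw [hwtdef]; module
      have hexp : ‖yk - wt‖ ^ 2
          = ‖yk - tyk‖ ^ 2 - 2 * t * ⟪yk - tyk, x - tyk⟫ + t ^ 2 * ‖x - tyk‖ ^ 2 := by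
        rw [hyw, norm_sub_sq_real, real_inner_smul_right, norm_smul, Real.norm_eq_abs,
          mul_pow, sq_abs]
        ring
      have hta : t * (2 * ⟪yk - tyk, x - tyk⟫) ≤ t * (t * ‖x - tyk‖ ^ 2) := by
        nlinarith [h1', hexp]
      exact le_of_mul_le_mul_left hta ht.1
    have hsplit : yk - x = (yk - tyk) + (tyk - x) := by abel
    have hexp2 : ‖yk - x‖ ^ 2
        = ‖yk - tyk‖ ^ 2 + 2 * ⟪yk - tyk, tyk - x⟫ + ‖tyk - x‖ ^ 2 := by
      rw [hsplit, norm_add_sq_real]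
    have hflip : ⟪yk - tyk, tyk - x⟫ = -⟪yk - tyk, x - tyk⟫ := by
      rw [← inner_neg_right, neg_sub]
    nlinarith [sq_nonneg ‖yk - tyk‖]
  -- Cauchy–Schwarz + linesearch
  have hcs2 : -(2 * δ * (1 / (2 * αk)) * ‖tyk - xk1‖ ^ 2)
      ≤ ⟪f' xk1 - f' tyk, tyk - xk1⟫ := by
    have h0 : ‖xk1 - tyk‖ = ‖tyk - xk1‖ := norm_sub_rev _ _
    have hδα : δ / αk = 2 * δ * (1 / (2 * αk)) := by field_simp
    have hnn : (0:ℝ) ≤ ‖tyk - xk1‖ := norm_nonneg _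
    have h1 : ‖f' xk1 - f' tyk‖ * ‖tyk - xk1‖ ≤ (δ / αk) * ‖tyk - xk1‖ ^ 2 := by
      rw [h0] at hls
      rw [div_mul_eq_mul_div, le_div_iff₀ hαk]
      nlinarith [hls, hnn]
    have hcs := abs_real_inner_le_norm (f' xk1 - f' tyk) (tyk - xk1)
    have hna := neg_abs_le (⟪f' xk1 - f' tyk, tyk - xk1⟫)
    rw [hδα] at h1
    linarith
  -- inner product algebra
  have hlin1 : ⟪f' tyk, x - tyk⟫ = ⟪f' tyk, x - xk1⟫ + ⟪f' tyk, xk1 - tyk⟫ := by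
    simp [inner_sub_right]
  have hlin2 : ⟪f' xk1, tyk - xk1⟫
      = ⟪f' tyk, tyk - xk1⟫ + ⟪f' xk1 - f' tyk, tyk - xk1⟫ := by
    rw [inner_sub_left]; ring
  have hlin3 : ⟪f' tyk, xk1 - tyk⟫ = -⟪f' tyk, tyk - xk1⟫ := by
    rw [← inner_neg_right, neg_sub]
  have hpol : 2 * ⟪tyk - xk1, x - xk1⟫
      = ‖tyk - xk1‖ ^ 2 + ‖x - xk1‖ ^ 2 - ‖tyk - x‖ ^ 2 := by
    have hs : tyk - x = (tyk - xk1) - (x - xk1) := by abel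
    have := norm_sub_sq_real (tyk - xk1) (x - xk1)
    rw [← hs] at this
    linarith
  have hnx : ‖xk1 - x‖ = ‖x - xk1‖ := norm_sub_rev _ _
  -- convert goal to reals
  rw [← EReal.coe_toReal hfx (hbf x).ne', ← EReal.coe_toReal hgx (hbg x).ne',
    ← EReal.coe_toReal hfp (hbf xk1).ne', ← EReal.coe_toReal hgp (hbg xk1).ne']
  norm_cast
  rw [hnx]
  have hpolc : 2 * (1 / (2 * αk)) * ⟪tyk - xk1, x - xk1⟫
      = (1 / (2 * αk)) * (‖tyk - xk1‖ ^ 2 + ‖x - xk1‖ ^ 2 - ‖tyk - x‖ ^ 2) := by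
    linear_combination (1 / (2 * αk)) * hpol
  have hprojc := mul_le_mul_of_nonneg_left hprojineq hc.le
  have hdc : (0:ℝ) ≤ (1 - 2 * δ) * ((1 / (2 * αk)) * ‖tyk - xk1‖ ^ 2) :=
    mul_nonneg (by linarith [hδ.2]) (by positivity)
  linarith [A1, A2, hthree', hcs2, hpolc, hprojc, hdc, hlin1, hlin2, hlin3]
end
end

section
/- Let H be a real Hilbert space and let f, g : H → ℝ ∪ {+∞} satisfy Assumptions A1–A2 (f, g proper, lower semicontinuous, convex, dom g ⊆ dom f, f Fréchet differentiable on an open set containing dom g, ∇f uniformly continuous on bounded subsets of dom g and mapping bounded subsets of dom g to bounded sets), with Ω := dom g closed. Let (x^k), (y^k), (ỹ^k), (t_k), (α_k) be generated by the accelerated forward-backward method: x^{−1} = x⁰ ∈ dom g, t₀ = 1, σ > 0, θ ∈ (0,1), δ ∈ (0,1/2), α_{−1} = σ; t_{k+1} = (1 + √(1 + 4t_k²))/2; y^k = x^k + ((t_k − 1)/t_{k+1})(x^k − x^{k−1}); ỹ^k = P_Ω(y^k); α_k is the largest α ∈ {α_{k−1}θⁿ : n ≥ 0} with α‖∇f(J(ỹ^k,α))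 − ∇f(ỹ^k)‖ ≤ δ‖J(ỹ^k,α) − ỹ^k‖; and x^{k+1} = J(ỹ^k, α_k). Suppose the set S* of minimizers of f+g is nonempty and α_k ≥ α > 0 for all k. Then for every k ≥ 1 and every x_* ∈ S*: (f+g)(x^k) − min_{x∈H}(f+g)(x) ≤ (2/α)·(‖x⁰ − x_*‖² + 2σ[(f+g)(x⁰) − min_{x∈H}(f+g)(x)])/(k+1)². -/
open Set Filter Topology Bornology RealInnerProductSpace

noncomputable section

variable {H : Type*} [NormedAddCommGroup H] [InnerProductSpace ℝ H] [CompleteSpace H]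

set_option linter.unusedSectionVars false

private lemma limit_trick {A B : ℝ} (hB : 0 ≤ B)
    (h : ∀ t : ℝ, 0 < t → t ≤ 1 → 0 ≤ A + t * B) : 0 ≤ A := by
  by_contra hA
  push_neg at hA
  set t := min 1 (-A / (2 * (B + 1))) with htdef
  have h1 : 0 < -A / (2 * (B + 1)) := div_pos (by linarith) (by linarith)
  have ht0 : 0 < t := lt_min one_pos h1
  have ht1 : t ≤ 1 := min_le_left _ _
  have ht2 : t ≤ -A / (2 * (B + 1)) := min_le_right _ _
  have h3 : t * (2 * (B + 1)) ≤ -A := by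
    rw [le_div_iff₀ (by linarith)] at ht2; linarith
  have h4 := h t ht0 ht1
  nlinarith [mul_nonneg ht0.le hB]

private lemma norm_add_smul_sq (a b : H) (t : ℝ) :
    ‖a + t • b‖ ^ 2 = ‖a‖ ^ 2 + 2 * t * ⟪a, b⟫ + t ^ 2 * ‖b‖ ^ 2 := by
  rw [norm_add_sq_real, real_inner_smul_right, norm_smul]
  simp [mul_pow, sq_abs]
  ring

private lemma deriv_le_of_slope {φ : ℝ → ℝ} {d C : ℝ}
    (hφ : HasDerivAt φ d 0)
    (h : ∀ t : ℝ, 0 < t → t ≤ 1 → φ t ≤ φ 0 + t * C) : d ≤ C := by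
  have h1 : Tendsto (slope φ 0) (𝓝[>] 0) (𝓝 d) :=
    (hasDerivAt_iff_tendsto_slope.mp hφ).mono_left
      (nhdsWithin_mono _ (fun t ht => (mem_Ioi.mp ht).ne'))
  refine le_of_tendsto h1 ?_
  filter_upwards [Ioc_mem_nhdsGT_of_mem (by constructor <;> norm_num : (0:ℝ) ∈ Ico 0 1)]
    with t ht
  rw [slope_def_field]
  rw [div_le_iff₀ (by simpa using ht.1)]
  have := h t ht.1 ht.2
  simp only [sub_zero]
  linarith

set_option linter.unusedSectionVars false

-- convexity in real form
private lemma conv_real (f : H → EReal)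
    (hbot : ∀ w, ⊥ < f w)
    (hconv : ∀ x y : H, ∀ a b : ℝ, 0 ≤ a → 0 ≤ b → a + b = 1 →
      f (a • x + b • y) ≤ (a : EReal) * f x + (b : EReal) * f y)
    {x y : H} (hx : f x ≠ ⊤) (hy : f y ≠ ⊤) {a b : ℝ}
    (ha : 0 ≤ a) (hb : 0 ≤ b) (hab : a + b = 1) :
    f (a • x + b • y) ≤ ((a * (f x).toReal + b * (f y).toReal : ℝ) : EReal) := by
  have h1 := hconv x y a b ha hb hab
  rwa [← EReal.coe_toReal hx (hbot x).ne', ← EReal.coe_toReal hy (hbot y).ne',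
    ← EReal.coe_mul, ← EReal.coe_mul, ← EReal.coe_add] at h1

private lemma conv_real' (f : H → EReal)
    (hbot : ∀ w, ⊥ < f w)
    (hconv : ∀ x y : H, ∀ a b : ℝ, 0 ≤ a → 0 ≤ b → a + b = 1 →
      f (a • x + b • y) ≤ (a : EReal) * f x + (b : EReal) * f y)
    {x y : H} (hx : f x ≠ ⊤) (hy : f y ≠ ⊤) {a b : ℝ}
    (ha : 0 ≤ a) (hb : 0 ≤ b) (hab : a + b = 1) :
    (f (a • x + b • y)).toReal ≤ a * (f x).toReal + b * (f y).toReal := by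
  have h1 := conv_real f hbot hconv hx hy ha hb hab
  calc (f (a • x + b • y)).toReal
      ≤ (((a * (f x).toReal + b * (f y).toReal : ℝ) : EReal)).toReal :=
        EReal.toReal_le_toReal h1 (hbot _).ne' (EReal.coe_ne_top _)
    _ = _ := EReal.toReal_coe _

private lemma conv_ne_top (f : H → EReal)
    (hbot : ∀ w, ⊥ < f w)
    (hconv : ∀ x y : H, ∀ a b : ℝ, 0 ≤ a → 0 ≤ b → a + b = 1 →
      f (a • x + b • y) ≤ (a : EReal) * f x + (b : EReal) * f y)
    {x y : H} (hx : f x ≠ ⊤) (hy : f y ≠ ⊤) {a b : ℝ}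
    (ha : 0 ≤ a) (hb : 0 ≤ b) (hab : a + b = 1) :
    f (a • x + b • y) ≠ ⊤ :=
  ((conv_real f hbot hconv hx hy ha hb hab).trans_lt (EReal.coe_lt_top _)).ne

private lemma grad_ineq_s15 (f : H → EReal) (f' : H → H)
    (hbot : ∀ w, ⊥ < f w)
    (hconv : ∀ x y : H, ∀ a b : ℝ, 0 ≤ a → 0 ≤ b → a + b = 1 →
      f (a • x + b • y) ≤ (a : EReal) * f x + (b : EReal) * f y)
    {x z : H} (hx : f x ≠ ⊤) (hz : f z ≠ ⊤)
    (hgrad : HasGradientAt (fun y => (f y).toReal) (f' x) x) :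
    (f x).toReal + ⟪f' x, z - x⟫ ≤ (f z).toReal := by
  set φ : ℝ → ℝ := fun t => (f (x + t • (z - x))).toReal with hφdef
  have hline : HasDerivAt (fun t : ℝ => x + t • (z - x)) (z - x) 0 := by
    simpa using ((hasDerivAt_id (0:ℝ)).smul_const (z - x)).const_add x
  have hco : HasDerivAt φ ⟪f' x, z - x⟫ 0 := by
    have h0 : x + (0:ℝ) • (z - x) = x := by simp
    have hg2 : HasFDerivAt (fun y => (f y).toReal)
        ((InnerProductSpace.toDual ℝ H) (f' x)) ((fun t : ℝ => x + t • (z - x)) 0) := by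
      simpa [h0] using hgrad.hasFDerivAt
    have h2 := hg2.comp_hasDerivAt (0:ℝ) hline
    simpa [InnerProductSpace.toDual_apply_apply, Function.comp_def, hφdef] using h2
  have hslope : ∀ t : ℝ, 0 < t → t ≤ 1 →
      φ t ≤ φ 0 + t * ((f z).toReal - (f x).toReal) := by
    intro t ht0 ht1
    have hpt : x + t • (z - x) = (1 - t) • x + t • z := by
      module
    have h3 := conv_real' f hbot hconv (a := 1 - t) (b := t) hx hz (by linarith) ht0.le (by ring)
    have hφ0 : φ 0 = (f x).toReal := by simp [hφdef]
    rw [hφ0]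
    calc φ t = (f ((1 - t) • x + t • z)).toReal := by rw [hφdef]; simp [hpt]
      _ ≤ (1 - t) * (f x).toReal + t * (f z).toReal := h3
      _ = (f x).toReal + t * ((f z).toReal - (f x).toReal) := by ring
  have h4 := deriv_le_of_slope hco hslope
  linarith

private lemma prox_mem (g : H → EReal) {α : ℝ} {z p : H}
    (hp : IsProxPt g α z p) {w : H} (hw : g w ≠ ⊤) : g p ≠ ⊤ := by
  have h1 := hp w
  intro htop
  rw [htop] at h1
  have : (⊤ : EReal) + ((1 / (2 * α) * ‖p - z‖ ^ 2 : ℝ) : EReal) = ⊤ :=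
    EReal.top_add_of_ne_bot (EReal.coe_ne_bot _)
  rw [this] at h1
  have h2 : g w + ((1 / (2 * α) * ‖w - z‖ ^ 2 : ℝ) : EReal) < ⊤ :=
    EReal.add_lt_top hw (EReal.coe_ne_top _)
  exact absurd (top_le_iff.mp h1) h2.ne

-- real form of the prox inequality, at points of the domain
private lemma prox_real (g : H → EReal) (hbot : ∀ w, ⊥ < g w) {α : ℝ} {z p : H}
    (hp : IsProxPt g α z p) (hpfin : g p ≠ ⊤) {y : H} (hy : g y ≠ ⊤) :
    (g p).toReal + 1 / (2 * α) * ‖p - z‖ ^ 2 ≤ (g y).toReal + 1 / (2 * α) * ‖y - z‖ ^ 2 := by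
  have h1 := hp y
  rw [← EReal.coe_toReal hpfin (hbot p).ne', ← EReal.coe_toReal hy (hbot y).ne',
    ← EReal.coe_add, ← EReal.coe_add, EReal.coe_le_coe_iff] at h1
  exact h1

private lemma prox_subgrad (g : H → EReal)
    (hbot : ∀ w, ⊥ < g w)
    (hconv : ∀ x y : H, ∀ a b : ℝ, 0 ≤ a → 0 ≤ b → a + b = 1 →
      g (a • x + b • y) ≤ (a : EReal) * g x + (b : EReal) * g y)
    {α : ℝ} (hα : 0 < α) {z p : H}
    (hp : IsProxPt g α z p) (hpfin : g p ≠ ⊤) {y : H} (hy : g y ≠ ⊤) :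
    (g p).toReal + 1 / α * ⟪z - p, y - p⟫ ≤ (g y).toReal := by
  set A : ℝ := (g y).toReal - (g p).toReal + 2 * (1 / (2 * α)) * ⟪p - z, y - p⟫ with hA
  set B : ℝ := 1 / (2 * α) * ‖y - p‖ ^ 2 with hB
  have hBpos : 0 ≤ B := by positivity
  have key : 0 ≤ A := by
    refine limit_trick hBpos (fun t ht0 ht1 => ?_)
    have hfin : g ((1 - t) • p + t • y) ≠ ⊤ :=
      conv_ne_top g hbot hconv (a := 1 - t) (b := t) hpfin hy (by linarith) ht0.le (by ring)
    have h1 := prox_real g hbot hp hpfin hfin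
    have h2 := conv_real' g hbot hconv (a := 1 - t) (b := t) hpfin hy (by linarith) ht0.le (by ring)
    have h3 : ‖(1 - t) • p + t • y - z‖ ^ 2
        = ‖p - z‖ ^ 2 + 2 * t * ⟪p - z, y - p⟫ + t ^ 2 * ‖y - p‖ ^ 2 := by
      rw [show (1 - t) • p + t • y - z = (p - z) + t • (y - p) by module]
      exact norm_add_smul_sq _ _ _
    rw [h3] at h1
    have h6 : 0 ≤ t * (A + t * B) := by
      rw [hA, hB]
      ring_nf
      ring_nf at h1 h2
      linarith
    nlinarith [h6, ht0, mul_pos ht0 ht0]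
  have hip : ⟪z - p, y - p⟫ = -⟪p - z, y - p⟫ := by
    rw [show z - p = -(p - z) by abel, inner_neg_left]
  have e1 : (1:ℝ) / α = 2 * (1 / (2 * α)) := by field_simp
  rw [hip, e1, show 2 * (1 / (2 * α)) * -⟪p - z, y - p⟫
      = -(2 * (1 / (2 * α)) * ⟪p - z, y - p⟫) by ring]
  simp only [hA] at key
  linarith [key]

private lemma proj_nonexp (g : H → EReal)
    (hbot : ∀ w, ⊥ < g w)
    (hconv : ∀ x y : H, ∀ a b : ℝ, 0 ≤ a → 0 ≤ b → a + b = 1 →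
      g (a • x + b • y) ≤ (a : EReal) * g x + (b : EReal) * g y)
    {y ty : H} (hty : g ty ≠ ⊤)
    (hmin : ∀ w ∈ edom g, ‖y - ty‖ ≤ ‖y - w‖)
    {z : H} (hz : g z ≠ ⊤) : ‖ty - z‖ ^ 2 ≤ ‖y - z‖ ^ 2 := by
  set A : ℝ := 2 * ⟪y - ty, ty - z⟫ with hA
  have hBpos : (0:ℝ) ≤ ‖ty - z‖ ^ 2 := by positivity
  have key : 0 ≤ A := by
    refine limit_trick hBpos (fun t ht0 ht1 => ?_)
    have hfin : g ((1 - t) • ty + t • z) ≠ ⊤ :=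
      conv_ne_top g hbot hconv (a := 1 - t) (b := t) hty hz (by linarith) ht0.le (by ring)
    have h1 := hmin _ (lt_top_iff_ne_top.mpr hfin)
    have h2 : ‖y - ty‖ ^ 2 ≤ ‖y - ((1 - t) • ty + t • z)‖ ^ 2 := by
      have := pow_le_pow_left₀ (norm_nonneg _) h1 2
      simpa using this
    have h3 : y - ((1 - t) • ty + t • z) = (y - ty) + t • (ty - z) := by module
    rw [h3, norm_add_smul_sq] at h2
    simp only [hA]
    nlinarith [h2]
  have h4 : ‖y - z‖ ^ 2 = ‖y - ty‖ ^ 2 + 2 * ⟪y - ty, ty - z⟫ + ‖ty - z‖ ^ 2 := by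
    rw [show y - z = (y - ty) + (1:ℝ) • (ty - z) by module, norm_add_smul_sq]
    ring
  simp only [hA] at key
  nlinarith [key, sq_nonneg ‖y - ty‖]

private lemma descent (f g : H → EReal) (f' : H → H)
    (hfbot : ∀ w, ⊥ < f w) (hgbot : ∀ w, ⊥ < g w)
    (hfconv : ∀ x y : H, ∀ a b : ℝ, 0 ≤ a → 0 ≤ b → a + b = 1 →
      f (a • x + b • y) ≤ (a : EReal) * f x + (b : EReal) * f y)
    (hgconv : ∀ x y : H, ∀ a b : ℝ, 0 ≤ a → 0 ≤ b → a + b = 1 →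
      g (a • x + b • y) ≤ (a : EReal) * g x + (b : EReal) * g y)
    (hdom : edom g ⊆ edom f)
    (hdiff : GradOnOpenSupset f f' (edom g))
    {α δ : ℝ} (hα : 0 < α) (hδ : 2 * δ ≤ 1) (hδ0 : 0 ≤ δ)
    {y p : H} (hy : y ∈ edom g)
    (hp : IsProxPt g α (y - α • f' y) p)
    (hls : α * ‖f' p - f' y‖ ≤ δ * ‖p - y‖)
    {z : H} (hz : z ∈ edom g) :
    ((f p).toReal + (g p).toReal) + 1/(2*α) * ‖p - z‖^2
      ≤ ((f z).toReal + (g z).toReal) + 1/(2*α) * ‖y - z‖^2 := by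
  obtain ⟨U, hUopen, hsub, hU⟩ := hdiff
  have hgp : g p ≠ ⊤ := prox_mem g hp hy.ne
  have hpdom : p ∈ edom g := lt_top_iff_ne_top.mpr hgp
  have hfp : f p ≠ ⊤ := (hdom hpdom).ne
  have hfy : f y ≠ ⊤ := (hdom hy).ne
  have hfz : f z ≠ ⊤ := (hdom hz).ne
  -- gradient inequalities
  have G1 : (f y).toReal + ⟪f' y, z - y⟫ ≤ (f z).toReal :=
    grad_ineq_s15 f f' hfbot hfconv hfy hfz (hU y (hsub hy)).2
  have G2 : (f p).toReal + ⟪f' p, y - p⟫ ≤ (f y).toReal :=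
    grad_ineq_s15 f f' hfbot hfconv hfp hfy (hU p (hsub hpdom)).2
  -- prox subgradient inequality
  have G3 : (g p).toReal + 1/α * ⟪(y - α • f' y) - p, z - p⟫ ≤ (g z).toReal :=
    prox_subgrad g hgbot hgconv hα hp hgp hz.ne
  -- inner product algebra
  set a : ℝ := ⟪f' y, z - p⟫
  set b : ℝ := ⟪f' y, p - y⟫
  set c : ℝ := ⟪f' p - f' y, p - y⟫
  set ip : ℝ := ⟪y - p, z - p⟫
  set inv : ℝ := 1/(2*α) with hinvdef
  have hinv : 0 < inv := by rw [hinvdef]; positivity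
  have e2 : 1/α = 2 * inv := by rw [hinvdef]; field_simp
  have i1 : ⟪f' p, y - p⟫ = -b + -c := by
    simp only [b, c, inner_sub_left]
    rw [show y - p = -(p - y) by abel, inner_neg_right]
    ring
  have i3 : ⟪(y - α • f' y) - p, z - p⟫ = ip - α * a := by
    simp only [a, ip]
    rw [show (y - α • f' y) - p = (y - p) - α • f' y by abel, inner_sub_left,
      real_inner_smul_left]
  have i4 : ⟪f' y, z - y⟫ = a + b := by
    simp only [a, b]
    rw [show z - y = (z - p) + (p - y) by abel, inner_add_right]
  -- Cauchy-Schwarz with linesearch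
  have P4 : c ≤ δ * (2 * inv) * ‖p - y‖ ^ 2 := by
    have hcs : c ≤ ‖f' p - f' y‖ * ‖p - y‖ := real_inner_le_norm _ _
    have h5 : α * (‖f' p - f' y‖ * ‖p - y‖) ≤ δ * ‖p - y‖ ^ 2 := by
      nlinarith [norm_nonneg (p - y), hls]
    have h6 : δ * (2 * inv) * ‖p - y‖ ^ 2 = 1/α * (δ * ‖p - y‖ ^ 2) := by
      rw [← e2]; ring
    rw [h6]
    calc c ≤ ‖f' p - f' y‖ * ‖p - y‖ := hcs
      _ = 1/α * (α * (‖f' p - f' y‖ * ‖p - y‖)) := by field_simp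
      _ ≤ 1/α * (δ * ‖p - y‖ ^ 2) := by
          apply mul_le_mul_of_nonneg_left h5 (by positivity)
  have P5 : 2 * ip = ‖p - y‖ ^ 2 + ‖z - p‖ ^ 2 - ‖y - z‖ ^ 2 := by
    simp only [ip]
    have := norm_sub_sq_real (y - p) (z - p)
    rw [show (y - p) - (z - p) = y - z by abel] at this
    rw [show ‖p - y‖ = ‖y - p‖ from norm_sub_rev _ _]
    linarith [this]
  -- combine
  rw [i1] at G2
  rw [i3] at G3
  rw [i4] at G1
  have P2 : (g p).toReal + (2 * inv) * ip - a ≤ (g z).toReal := by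
    have : 1/α * (ip - α * a) = (2 * inv) * ip - a := by
      rw [← e2]; field_simp
    linarith [G3, this.symm.le, this.le]
  have P5' : inv * (2 * ip) = inv * (‖p - y‖ ^ 2 + ‖z - p‖ ^ 2 - ‖y - z‖ ^ 2) := by
    rw [P5]
  have P6 : δ * (2 * inv) * ‖p - y‖ ^ 2 ≤ inv * ‖p - y‖ ^ 2 := by
    nlinarith [mul_nonneg hinv.le (sq_nonneg ‖p - y‖)]
  have hzp : ‖p - z‖ = ‖z - p‖ := norm_sub_rev _ _
  rw [hzp]
  nlinarith [G1, G2, P2, P4, P5', P6]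

private lemma clear_c {A Fp Fz Nzp Nzy : ℝ} (hA : 0 < A)
    (h : Fp + 1/(2*A)*Nzp ≤ Fz + 1/(2*A)*Nzy) : 2*A*Fp + Nzp ≤ 2*A*Fz + Nzy := by
  have hA' : A ≠ 0 := hA.ne'
  have h2 : 1/(2*A)*(Nzp - Nzy) ≤ Fz - Fp := by linarith
  have h3 := mul_le_mul_of_nonneg_left h2 (by positivity : (0:ℝ) ≤ 2*A)
  have e : 2*A*(1/(2*A)*(Nzp - Nzy)) = Nzp - Nzy := by field_simp
  rw [e] at h3
  linarith

private lemma combine_step {A T tk Fp Fk Fs Nzp Nzy Np Nu : ℝ}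
    (hT : 0 < T)
    (hq : tk^2 = T^2 - T)
    (hNp : Np = T^2 * Nzp) (hNu : Nu = T^2 * Nzy)
    (m : 2*A*Fp + Nzp ≤ 2*A*((1 - 1/T)*Fk + (1/T)*Fs) + Nzy) :
    2*A*T^2*(Fp - Fs) + Np ≤ 2*A*tk^2*(Fk - Fs) + Nu := by
  have hT' : T ≠ 0 := hT.ne'
  rw [hq, hNp, hNu]
  have m2 := mul_le_mul_of_nonneg_left m (by positivity : (0:ℝ) ≤ T^2)
  have e : T^2 * (2*A*((1 - 1/T)*Fk + (1/T)*Fs) + Nzy)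
      = 2*A*((T^2-T)*Fk + T*Fs) + T^2*Nzy := by
    field_simp
  rw [e] at m2
  nlinarith [m2]

set_option maxHeartbeats 1000000 in
/-- Theorem 4.5: complexity `O(k⁻²)` of the accelerated
forward-backward method (Method 2 of Section 4.2) with Linesearch 1, when the
stepsizes are bounded below by `α > 0`. Here `x⁻¹ = x⁰` is encoded by truncated
subtraction on `ℕ` (`x (k-1) = x 0` for `k = 0`). -/
theorem stmt15
    (f g : H → EReal) (f' : H → H) (prox : ℝ → H → H)
    (hf : ProperLscConvex f) (hg : ProperLscConvex g)
    (hdom : edom g ⊆ edom f)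
    (hdiff : GradOnOpenSupset f f' (edom g))
    (hA2 : UCBddOnBounded g f')
    (hclosed : IsClosed (edom g))
    (hprox : ∀ α : ℝ, 0 < α → ∀ z : H, IsProxPt g α z (prox α z))
    (J : H → ℝ → H) (hJ : ∀ (x : H) (α : ℝ), J x α = prox α (x - α • f' x))
    (σ θ δ : ℝ) (hσ : 0 < σ) (hθ : θ ∈ Set.Ioo (0 : ℝ) 1)
    (hδ : δ ∈ Set.Ioo (0 : ℝ) (1 / 2))
    (x yseq ty : ℕ → H) (t a : ℕ → ℝ)
    (hx0 : x 0 ∈ edom g)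
    (ht0 : t 0 = 1)
    (ht : ∀ k : ℕ, t (k + 1) = (1 + Real.sqrt (1 + 4 * t k ^ 2)) / 2)
    (hy : ∀ k : ℕ, yseq k = x k + ((t k - 1) / t (k + 1)) • (x k - x (k - 1)))
    (hty : ∀ k : ℕ, ty k ∈ edom g ∧ ∀ w ∈ edom g, ‖yseq k - ty k‖ ≤ ‖yseq k - w‖)
    (hls : ∀ k : ℕ, ∃ n : ℕ,
      a k = (if k = 0 then σ else a (k - 1)) * θ ^ n ∧
      LS1 f' J δ (ty k) (a k) ∧
      ∀ m : ℕ, m < n → ¬ LS1 f' J δ (ty k) ((if k = 0 then σ else a (k - 1)) * θ ^ m))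
    (hiter : ∀ k : ℕ, x (k + 1) = J (ty k) (a k))
    (hS : (argminSet f g).Nonempty)
    (α : ℝ) (hα : 0 < α) (hak : ∀ k : ℕ, α ≤ a k) :
    ∀ k : ℕ, 1 ≤ k → ∀ xs ∈ argminSet f g,
      (f (x k) + g (x k)) - (⨅ z, f z + g z)
        ≤ (((2 / α) * (‖x 0 - xs‖ ^ 2
              + 2 * σ * ((f (x 0) + g (x 0)) - (⨅ z, f z + g z)).toReal)
            / ((k : ℝ) + 1) ^ 2 : ℝ) : EReal) := by
  -- setup
  have hfbot := hf.2.1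
  have hgbot := hg.2.1
  have hfconv := hf.2.2.2
  have hgconv := hg.2.2.2
  have hθ0 := hθ.1
  have hθ1 := hθ.2
  have hδ0 : 0 ≤ δ := hδ.1.le
  have hδ1 : 2 * δ ≤ 1 := by have := hδ.2; linarith
  have sumco : ∀ w : H, f w ≠ ⊤ → g w ≠ ⊤ →
      f w + g w = (((f w).toReal + (g w).toReal : ℝ) : EReal) := by
    intro w hfw hgw
    rw [EReal.coe_add, EReal.coe_toReal hfw (hfbot w).ne', EReal.coe_toReal hgw (hgbot w).ne']
  -- stepsize facts
  have hapos : ∀ k, 0 < a k := fun k => lt_of_lt_of_le hα (hak k)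
  have ha0 : a 0 ≤ σ := by
    obtain ⟨n, hn, -, -⟩ := hls 0
    rw [if_pos rfl] at hn
    have hp1 : θ ^ n ≤ 1 := pow_le_one₀ hθ0.le hθ1.le
    nlinarith [hσ]
  have hamono : ∀ k, a (k + 1) ≤ a k := by
    intro k
    obtain ⟨n, hn, -, -⟩ := hls (k + 1)
    rw [if_neg (Nat.succ_ne_zero k), Nat.add_sub_cancel] at hn
    have hp1 : θ ^ n ≤ 1 := pow_le_one₀ hθ0.le hθ1.le
    nlinarith [hapos k]
  -- t facts
  have ht1 : ∀ k, 1 ≤ t k := by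
    intro k
    induction k with
    | zero => rw [ht0]
    | succ k ih =>
      rw [ht k]
      have h1 : (1:ℝ) ≤ Real.sqrt (1 + 4 * t k ^ 2) := by
        have h2 := Real.sqrt_le_sqrt (show (1:ℝ) ≤ 1 + 4 * t k ^ 2 by nlinarith)
        rwa [Real.sqrt_one] at h2
      linarith
  have htpos : ∀ k, 0 < t k := fun k => lt_of_lt_of_le one_pos (ht1 k)
  have htquad : ∀ k, t k ^ 2 = t (k+1) ^ 2 - t (k+1) := by
    intro k
    rw [ht k]
    have hs := Real.sq_sqrt (show (0:ℝ) ≤ 1 + 4 * t k ^ 2 by positivity)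
    nlinarith [hs]
  have htk : ∀ k : ℕ, ((k:ℝ) + 2) / 2 ≤ t k := by
    intro k
    induction k with
    | zero => simp [ht0]
    | succ k ih =>
      rw [ht k]
      have h2 : 2 * t k ≤ Real.sqrt (1 + 4 * t k ^ 2) := by
        have h3 := Real.sqrt_le_sqrt (show (2 * t k)^2 ≤ 1 + 4 * t k ^ 2 by nlinarith)
        rwa [Real.sqrt_sq (by nlinarith [htpos k] : (0:ℝ) ≤ 2 * t k)] at h3
      push_cast
      linarith
  -- iterates stay in the domain
  have xdom : ∀ k, x k ∈ edom g := by
    intro k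
    induction k with
    | zero => exact hx0
    | succ k ih =>
      have h1 : IsProxPt g (a k) (ty k - a k • f' (ty k)) (x (k+1)) := by
        rw [hiter k, hJ]
        exact hprox (a k) (hapos k) _
      exact lt_top_iff_ne_top.mpr (prox_mem g h1 (hty k).1.ne)
  intro k hk xs hxs
  -- finiteness at xs
  have hfx0 : f (x 0) ≠ ⊤ := (hdom hx0).ne
  have hsumxs : f xs + g xs ≠ ⊤ :=
    ((hxs (x 0)).trans_lt (EReal.add_lt_top hfx0 hx0.ne)).ne
  have hfxs : f xs ≠ ⊤ := fun h => hsumxs (by rw [h]; exact EReal.top_add_of_ne_bot (hgbot xs).ne')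
  have hgxs : g xs ≠ ⊤ := fun h => hsumxs (by rw [h]; exact EReal.add_top_of_ne_bot (hfbot xs).ne')
  have hxsdom : xs ∈ edom g := lt_top_iff_ne_top.mpr hgxs
  -- real-valued objective
  set FR : H → ℝ := fun w => (f w).toReal + (g w).toReal with hFRdef
  have hmin_real : ∀ w, w ∈ edom g → FR xs ≤ FR w := by
    intro w hw
    have h1 := hxs w
    rw [sumco xs hfxs hgxs, sumco w (hdom hw).ne hw.ne, EReal.coe_le_coe_iff] at h1
    exact h1
  set v : ℕ → ℝ := fun k => FR (x k) - FR xs with hvdef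
  have hv0 : ∀ k, 0 ≤ v k := fun k => sub_nonneg.mpr (hmin_real (x k) (xdom k))
  set U : ℕ → H := fun k => t k • x k - (t k - 1) • x (k - 1) - xs with hUdef
  -- key one-step inequality
  have key : ∀ j, 2*(a j)*(t (j+1))^2*(v (j+1)) + ‖U (j+1)‖^2
      ≤ 2*(a j)*(t j)^2*(v j) + ‖U j‖^2 := by
    intro j
    set T := t (j + 1) with hTdef
    have hT1 : 1 ≤ T := ht1 (j+1)
    have hT : 0 < T := lt_of_lt_of_le one_pos hT1
    have hc1 : (0:ℝ) ≤ 1/T := by positivity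
    have hc2 : (0:ℝ) ≤ 1 - 1/T := by
      rw [sub_nonneg, div_le_one hT]; exact hT1
    have hc3 : (1 - 1/T) + 1/T = 1 := by ring
    set z : H := (1 - 1/T) • x j + (1/T) • xs with hzdef
    have hzg : g z ≠ ⊤ :=
      conv_ne_top g hgbot hgconv (xdom j).ne hgxs hc2 hc1 hc3
    have hzdom : z ∈ edom g := lt_top_iff_ne_top.mpr hzg
    have hproxj : IsProxPt g (a j) (ty j - a j • f' (ty j)) (x (j+1)) := by
      rw [hiter j, hJ]
      exact hprox (a j) (hapos j) _
    have hlsj : a j * ‖f' (x (j+1)) - f' (ty j)‖ ≤ δ * ‖x (j+1) - ty j‖ := by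
      obtain ⟨n, -, h2, -⟩ := hls j
      unfold LS1 at h2
      rw [← hiter j] at h2
      exact h2
    have D := descent f g f' hfbot hgbot hfconv hgconv hdom hdiff (hapos j) hδ1 hδ0
      (hty j).1 hproxj hlsj hzdom
    have proj : ‖ty j - z‖^2 ≤ ‖yseq j - z‖^2 :=
      proj_nonexp g hgbot hgconv (hty j).1.ne (hty j).2 hzg
    have convf := conv_real' f hfbot hfconv (a := 1 - 1/T) (b := 1/T)
      (hdom (xdom j)).ne hfxs hc2 hc1 hc3
    have convg := conv_real' g hgbot hgconv (a := 1 - 1/T) (b := 1/T)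
      (xdom j).ne hgxs hc2 hc1 hc3
    -- vector identities
    have VI1 : T • (yseq j - z) = U j := by
      rw [hy j, hzdef, hUdef]
      match_scalars <;> field_simp <;> rw [hTdef] <;> field_simp [(htpos (j+1)).ne'] <;> ring
    have VI2 : T • (x (j+1) - z) = U (j+1) := by
      rw [hzdef, hUdef]
      simp only [Nat.add_sub_cancel]
      match_scalars <;> field_simp <;> rw [hTdef]
    have n1 : ‖U j‖^2 = T^2 * ‖yseq j - z‖^2 := by
      rw [← VI1, norm_smul]
      simp [mul_pow, sq_abs]
    have n2 : ‖U (j+1)‖^2 = T^2 * ‖x (j+1) - z‖^2 := by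
      rw [← VI2, norm_smul]
      simp [mul_pow, sq_abs]
    -- clear the 1/(2*a j) factor
    have m0 := clear_c (hapos j) D
    have m1 : 2*(a j)*(FR (x (j+1))) + ‖x (j+1) - z‖^2
        ≤ 2*(a j)*((1 - 1/T)*(FR (x j)) + (1/T)*(FR xs)) + ‖yseq j - z‖^2 := by
      have hcb : FR z ≤ (1 - 1/T)*(FR (x j)) + (1/T)*(FR xs) := by
        simp only [hFRdef]
        linarith [convf, convg]
      have h5 := mul_le_mul_of_nonneg_left hcb (by linarith [hapos j] : (0:ℝ) ≤ 2*(a j))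
      simp only [hFRdef] at m0 ⊢
      linarith [m0, proj, h5]
    exact combine_step hT (htquad j) n2 n1 m1
  -- energy decreases
  set E : ℕ → ℝ := fun k => 2*(a k)*(t k)^2*(v k) + ‖U k‖^2 with hEdef
  clear_value FR v U E
  have Emono : ∀ j, E (j+1) ≤ E j := by
    intro j
    have h1 := key j
    have h2 : 0 ≤ (a j - a (j+1))*((t (j+1))^2*(v (j+1))) :=
      mul_nonneg (sub_nonneg.mpr (hamono j)) (mul_nonneg (sq_nonneg _) (hv0 (j+1)))
    simp only [hEdef]
    nlinarith [h1, h2]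
  have EleE0 : ∀ j, E j ≤ E 0 := by
    intro j
    induction j with
    | zero => exact le_refl _
    | succ j ih => exact le_trans (Emono j) ih
  -- E 0 bound
  have hU0 : U 0 = x 0 - xs := by
    simp only [hUdef, ht0]
    simp
  have hE0 : E 0 ≤ ‖x 0 - xs‖^2 + 2*σ*(v 0) := by
    simp only [hEdef, hU0, ht0]
    nlinarith [ha0, hv0 0, hσ]
  -- conclude
  have hbound : 2*(a k)*(t k)^2*(v k) ≤ ‖x 0 - xs‖^2 + 2*σ*(v 0) := by
    have h7 := EleE0 k
    have h6 := hE0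
    simp only [hEdef] at h7 h6
    nlinarith [h7, h6, sq_nonneg ‖U k‖]
  have htklb : ((k:ℝ) + 1)/2 ≤ t k := by
    have := htk k
    linarith
  have hkpos : (0:ℝ) < (k:ℝ) + 1 := by positivity
  have hfinal : v k ≤ 2 / α * (‖x 0 - xs‖ ^ 2 + 2 * σ * (v 0)) / ((k:ℝ) + 1) ^ 2 := by
    have e2 : (((k:ℝ)+1)/2)^2 ≤ (t k)^2 := by
      nlinarith [mul_nonneg (sub_nonneg.mpr htklb)
        (by linarith [htpos k, hkpos] : (0:ℝ) ≤ t k + ((k:ℝ)+1)/2)]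
    have f1 : α*((((k:ℝ)+1)/2)^2) ≤ (a k)*((t k)^2) :=
      mul_le_mul (hak k) e2 (by positivity) (hapos k).le
    have h1 := mul_le_mul_of_nonneg_right f1 (hv0 k)
    have h2 : v k * ((k:ℝ)+1)^2 * α ≤ 2 * (‖x 0 - xs‖^2 + 2*σ*(v 0)) := by
      linarith only [h1, hbound]
    refine (le_div_iff₀ (by positivity : (0:ℝ) < ((k:ℝ)+1)^2)).mpr ?_
    rw [show 2 / α * (‖x 0 - xs‖ ^ 2 + 2 * σ * (v 0))
        = 2 * (‖x 0 - xs‖^2 + 2*σ*(v 0)) / α by ring]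
    refine le_div_iff₀ hα |>.mpr ?_
    linarith [h2]
  -- convert to EReal
  have hinf0 : (⨅ z, f z + g z) = f xs + g xs :=
    le_antisymm (iInf_le _ xs) (le_iInf hxs)
  rw [hinf0, sumco xs hfxs hgxs, sumco (x k) (hdom (xdom k)).ne (xdom k).ne,
    sumco (x 0) hfx0 hx0.ne, ← EReal.coe_sub, ← EReal.coe_sub, EReal.toReal_coe,
    EReal.coe_le_coe_iff]
  simpa only [hvdef, hFRdef] using hfinal
end
end

section
/- Let H be a real Hilbert space, f, g : H → ℝ ∪ {+∞} proper, lower semicontinuous, convex with dom g ⊆ dom f, f Fréchet differentiable on an open set containing dom g, with Ω := dom g closed, and suppose ∇f is globally Lipschitz continuous on dom g. Let (α_k) be the stepsizes generated by Linesearch 1 in the accelerated forward-backward method (at step k, α_k is the largest α ∈ {α_{k−1}θⁿ : n ≥ 0} with α‖∇f(J(ỹ^k,α)) − ∇f(ỹ^k)‖ ≤ δ‖J(ỹ^k,α) − ỹ^k‖, where ỹ^k = P_Ω(y^k) ∈ dom g, α_{−1} = σ > 0, θ ∈ (0,1), δ ∈ (0,1/2)), so that (α_k) is nonincreasing. Then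 there exists α > 0 such that α_k ≥ α for all k. -/
open Set Filter Topology Bornology RealInnerProductSpace

noncomputable section

variable {H : Type*} [NormedAddCommGroup H] [InnerProductSpace ℝ H] [CompleteSpace H]

/-- Proposition 4.4: if `∇f` is globally Lipschitz on `dom g`, the
(nonincreasing) stepsizes generated by Linesearch 1 in the accelerated method are
bounded below by some `α > 0`. -/
theorem stmt16
    (f g : H → EReal) (f' : H → H) (prox : ℝ → H → H)
    (hf : ProperLscConvex f) (hg : ProperLscConvex g)
    (hdom : edom g ⊆ edom f)
    (hdiff : GradOnOpenSupset f f' (edom g))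
    (hclosed : IsClosed (edom g))
    (hprox : ∀ α : ℝ, 0 < α → ∀ z : H, IsProxPt g α z (prox α z))
    (J : H → ℝ → H) (hJ : ∀ (x : H) (α : ℝ), J x α = prox α (x - α • f' x))
    (L : ℝ) (hL : 0 < L)
    (hLip : ∀ x ∈ edom g, ∀ y ∈ edom g, ‖f' x - f' y‖ ≤ L * ‖x - y‖)
    (σ θ δ : ℝ) (hσ : 0 < σ) (hθ : θ ∈ Set.Ioo (0 : ℝ) 1)
    (hδ : δ ∈ Set.Ioo (0 : ℝ) (1 / 2))
    (yseq ty : ℕ → H) (a : ℕ → ℝ)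
    (hty : ∀ k : ℕ, ty k ∈ edom g ∧ ∀ w ∈ edom g, ‖yseq k - ty k‖ ≤ ‖yseq k - w‖)
    (hls : ∀ k : ℕ, ∃ n : ℕ,
      a k = (if k = 0 then σ else a (k - 1)) * θ ^ n ∧
      LS1 f' J δ (ty k) (a k) ∧
      ∀ m : ℕ, m < n → ¬ LS1 f' J δ (ty k) ((if k = 0 then σ else a (k - 1)) * θ ^ m))
    (hmono : ∀ k : ℕ, a (k + 1) ≤ a k) :
    ∃ α > (0 : ℝ), ∀ k : ℕ, α ≤ a k := by

  obtain ⟨hθ0, hθ1⟩ := hθ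
  obtain ⟨hδ0, hδ2⟩ := hδ
  -- J x α lies in dom g for α > 0
  have hJdom : ∀ (x : H) (α : ℝ), 0 < α → J x α ∈ edom g := by
    intro x α hα
    obtain ⟨y₀, hy₀⟩ := hg.1
    have hp := hprox α hα (x - α • f' x) y₀
    rw [hJ]
    by_contra htop
    have htop' : g (prox α (x - α • f' x)) = ⊤ := by
      simpa [edom, not_lt, top_le_iff] using htop
    rw [htop'] at hp
    have h1 : (⊤ : EReal) + (((1 / (2 * α)) * ‖prox α (x - α • f' x) - (x - α • f' x)‖ ^ 2 : ℝ) : EReal) = ⊤ :=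
      EReal.top_add_coe _
    rw [h1, top_le_iff] at hp
    have h2 : g y₀ + (((1 / (2 * α)) * ‖y₀ - (x - α • f' x)‖ ^ 2 : ℝ) : EReal) < ⊤ :=
      EReal.add_lt_top hy₀.ne (EReal.coe_lt_top _).ne
    exact absurd hp h2.ne
  -- small stepsizes are accepted
  have hsmall : ∀ x ∈ edom g, ∀ α : ℝ, 0 < α → α * L ≤ δ → LS1 f' J δ x α := by
    intro x hx α hα hαL
    have hnorm := hLip (J x α) (hJdom x α hα) x hx
    unfold LS1
    have h1 : α * ‖f' (J x α) - f' x‖ ≤ α * (L * ‖J x α - x‖) :=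
      mul_le_mul_of_nonneg_left hnorm hα.le
    nlinarith [norm_nonneg (J x α - x)]
  have hδL : 0 < θ * δ / L := by positivity
  -- key step bound
  have key : ∀ (k : ℕ) (β : ℝ), 0 < β → (if k = 0 then σ else a (k - 1)) = β →
      min β (θ * δ / L) ≤ a k := by
    intro k β hβ hβeq
    obtain ⟨n, hak, hacc, hfail⟩ := hls k
    rw [hβeq] at hak hfail
    cases n with
    | zero => simp at hak; rw [hak]; exact min_le_left _ _
    | succ m =>
      have hfm := hfail m (Nat.lt_succ_self m)
      have hpos : 0 < β * θ ^ m := by positivity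
      have : ¬ (β * θ ^ m * L ≤ δ) := fun h => hfm (hsmall (ty k) (hty k).1 _ hpos h)
      push_neg at this
      have h2 : θ * δ / L < θ * (β * θ ^ m) := by
        rw [div_lt_iff₀ hL]
        nlinarith
      have : θ * δ / L ≤ a k := by
        rw [hak]
        calc θ * δ / L ≤ θ * (β * θ ^ m) := h2.le
          _ = β * θ ^ (m + 1) := by ring
      exact le_trans (min_le_right _ _) this
  -- induction
  have hbound : ∀ k, min σ (θ * δ / L) ≤ a k := by
    intro k
    induction k with
    | zero => exact key 0 σ hσ (by simp)
    | succ k ih =>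
      have hak : 0 < a k := lt_of_lt_of_le (lt_min hσ hδL) ih
      have h := key (k + 1) (a k) hak (by simp)
      calc min σ (θ * δ / L) ≤ min (a k) (θ * δ / L) :=
            le_min ih (min_le_right _ _)
        _ ≤ a (k + 1) := h
  exact ⟨min σ (θ * δ / L), lt_min hσ hδL, hbound⟩
end
end

section
/- Let H be a real Hilbert space, f, g : H → ℝ ∪ {+∞} proper, lower semicontinuous, convex with dom g ⊆ dom f, f Fréchet differentiable on an open set containing dom g. Let x^k ∈ dom g, J_k := prox_g(x^k − ∇f(x^k)), β_k ∈ (0,1], x^{k+1} = x^k − β_k(x^k − J_k), and suppose the linesearch inequality (f+g)(x^{k+1}) ≤ (f+g)(x^k) − β_k[g(x^k) − g(J_k)] − β_k⟨∇f(x^k), x^k − J_k⟩ + (β_k/2)‖x^k − J_k‖² holds. Then for every x ∈ dom g: ‖x^{k+1} − x‖² ≤ ‖x^k − x‖² + 2[(f+g)(x^k) − (f+g)(x^{k+1})] + 2β_k[(f+g)(x) − (f+g)(x^k)]. -/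
open Set Filter Topology Bornology RealInnerProductSpace

noncomputable section

variable {H : Type*} [NormedAddCommGroup H] [InnerProductSpace ℝ H] [CompleteSpace H]

lemma small_t_s17 {a b C : ℝ} (hC : 0 ≤ C) (h : ∀ t : ℝ, 0 < t → t ≤ 1 → a ≤ b + t * C) :
    a ≤ b := by
  apply le_of_forall_pos_le_add
  intro ε hε
  have ht0 : 0 < min 1 (ε / (C + 1)) := lt_min one_pos (by positivity)
  have := h _ ht0 (min_le_left _ _)
  have h2 : min 1 (ε / (C + 1)) * C ≤ ε := by
    calc min 1 (ε / (C + 1)) * C ≤ (ε / (C + 1)) * C :=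
          mul_le_mul_of_nonneg_right (min_le_right _ _) hC
      _ ≤ ε := by
          rw [div_mul_eq_mul_div, div_le_iff₀ (by linarith)]
          nlinarith
  linarith

set_option maxHeartbeats 1000000 in
/-- Proposition 5.1: for one step of Method 3 (Linesearch 2), for every
`x ∈ dom g`:
`‖x⁺ − x‖² ≤ ‖x⁰ − x‖² + 2[(f+g)(x⁰) − (f+g)(x⁺)] + 2β[(f+g)(x) − (f+g)(x⁰)]`. -/
theorem stmt17
    (f g : H → EReal) (f' : H → H)
    (hf : ProperLscConvex f) (hg : ProperLscConvex g)
    (hdom : edom g ⊆ edom f)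
    (hdiff : GradOnOpenSupset f f' (edom g))
    (xk : H) (hxk : xk ∈ edom g)
    (Jk : H) (hJk : IsProxPt g 1 (xk - f' xk) Jk)
    (βk : ℝ) (hβk : βk ∈ Set.Ioc (0 : ℝ) 1)
    (xk1 : H) (hxk1 : xk1 = xk - βk • (xk - Jk))
    (hls : f xk1 + g xk1 ≤
      f xk + g xk - (βk : EReal) * (g xk - g Jk)
        - ((βk * ⟪f' xk, xk - Jk⟫ : ℝ) : EReal)
        + (((βk / 2) * ‖xk - Jk‖ ^ 2 : ℝ) : EReal)) :
    ∀ x ∈ edom g,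
      ((‖xk1 - x‖ ^ 2 : ℝ) : EReal)
        ≤ ((‖xk - x‖ ^ 2 : ℝ) : EReal)
            + 2 * ((f xk + g xk) - (f xk1 + g xk1))
            + ((2 * βk : ℝ) : EReal) * ((f x + g x) - (f xk + g xk)) := by
  obtain ⟨hβ0, hβ1⟩ := hβk
  intro x hx
  have hfbot : ∀ y, f y ≠ ⊥ := fun y => (hf.2.1 y).ne'
  have hgbot : ∀ y, g y ≠ ⊥ := fun y => (hg.2.1 y).ne'
  have hgconv := hg.2.2.2
  have hfconv := hf.2.2.2
  have hgxk : g xk ≠ ⊤ := hxk.ne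
  have hfxk : f xk ≠ ⊤ := (hdom hxk).ne
  have hgx : g x ≠ ⊤ := hx.ne
  have hfx : f x ≠ ⊤ := (hdom hx).ne
  -- g Jk finite
  have hgJk : g Jk ≠ ⊤ := by
    intro h
    have := hJk xk
    rw [h] at this
    simp only [EReal.top_add_of_ne_bot (EReal.coe_ne_bot _)] at this
    exact (lt_of_le_of_lt this (by
      rw [(EReal.coe_toReal hgxk (hgbot xk)).symm, ← EReal.coe_add]
      exact EReal.coe_lt_top _)).ne rfl
  -- xk1 as convex combination, and finiteness there
  have hcomb : xk1 = (1 - βk) • xk + βk • Jk := by rw [hxk1]; module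
  have hgxk1lt : g xk1 < ⊤ := by
    have := hgconv xk Jk (1 - βk) βk (by linarith) hβ0.le (by ring)
    rw [← hcomb] at this
    refine lt_of_le_of_lt this ?_
    rw [(EReal.coe_toReal hgxk (hgbot xk)).symm, (EReal.coe_toReal hgJk (hgbot Jk)).symm,
      ← EReal.coe_mul, ← EReal.coe_mul, ← EReal.coe_add]
    exact EReal.coe_lt_top _
  have hgxk1 : g xk1 ≠ ⊤ := hgxk1lt.ne
  have hfxk1 : f xk1 ≠ ⊤ := (hdom hgxk1lt).ne
  -- real values
  set Fxk := (f xk).toReal with hFxk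
  set Fx := (f x).toReal with hFx
  set Fxk1 := (f xk1).toReal with hFxk1
  set Gxk := (g xk).toReal with hGxk
  set Gx := (g x).toReal with hGx
  set GJk := (g Jk).toReal with hGJk
  set Gxk1 := (g xk1).toReal with hGxk1
  have efxk : f xk = ((Fxk : ℝ) : EReal) := (EReal.coe_toReal hfxk (hfbot xk)).symm
  have efx : f x = ((Fx : ℝ) : EReal) := (EReal.coe_toReal hfx (hfbot x)).symm
  have efxk1 : f xk1 = ((Fxk1 : ℝ) : EReal) := (EReal.coe_toReal hfxk1 (hfbot xk1)).symm
  have egxk : g xk = ((Gxk : ℝ) : EReal) := (EReal.coe_toReal hgxk (hgbot xk)).symm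
  have egx : g x = ((Gx : ℝ) : EReal) := (EReal.coe_toReal hgx (hgbot x)).symm
  have egJk : g Jk = ((GJk : ℝ) : EReal) := (EReal.coe_toReal hgJk (hgbot Jk)).symm
  have egxk1 : g xk1 = ((Gxk1 : ℝ) : EReal) := (EReal.coe_toReal hgxk1 (hgbot xk1)).symm
  -- Step A: prox variational inequality
  have hA : ⟪xk - Jk, x - Jk⟫ ≤ Gx - GJk + ⟪f' xk, x - Jk⟫ := by
    have key : ∀ t : ℝ, 0 < t → t ≤ 1 →
        GJk - Gx ≤ ⟪Jk - (xk - f' xk), x - Jk⟫ + t * (‖x - Jk‖ ^ 2 / 2) := by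
      intro t ht0 ht1
      set yt := Jk + t • (x - Jk) with hyt
      have hcomb2 : yt = (1 - t) • Jk + t • x := by rw [hyt]; module
      have h1 := hJk yt
      have h2 := hgconv Jk x (1 - t) t (by linarith) ht0.le (by ring)
      rw [← hcomb2] at h2
      have h3 : g Jk + (((1 / (2 * 1)) * ‖Jk - (xk - f' xk)‖ ^ 2 : ℝ) : EReal)
          ≤ ((((1 - t) * GJk + t * Gx) + (1 / (2 * 1)) * ‖yt - (xk - f' xk)‖ ^ 2 : ℝ) : EReal) := by
        refine le_trans h1 ?_
        rw [egJk, egx] at h2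
        calc g yt + (((1 / (2 * 1)) * ‖yt - (xk - f' xk)‖ ^ 2 : ℝ) : EReal)
            ≤ ((1 - t : ℝ) : EReal) * ((GJk : ℝ) : EReal) + ((t : ℝ) : EReal) * ((Gx : ℝ) : EReal)
              + (((1 / (2 * 1)) * ‖yt - (xk - f' xk)‖ ^ 2 : ℝ) : EReal) :=
              add_le_add_left h2 _
          _ = _ := by norm_cast
      rw [egJk] at h3
      have h4 : GJk + (1 / (2 * 1)) * ‖Jk - (xk - f' xk)‖ ^ 2
          ≤ ((1 - t) * GJk + t * Gx) + (1 / (2 * 1)) * ‖yt - (xk - f' xk)‖ ^ 2 := by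
        exact_mod_cast h3
      have hexp : ‖yt - (xk - f' xk)‖ ^ 2 = ‖Jk - (xk - f' xk)‖ ^ 2
          + 2 * (t * ⟪Jk - (xk - f' xk), x - Jk⟫) + t ^ 2 * ‖x - Jk‖ ^ 2 := by
        have : yt - (xk - f' xk) = (Jk - (xk - f' xk)) + t • (x - Jk) := by rw [hyt]; module
        rw [this, norm_add_sq_real, real_inner_smul_right, norm_smul]
        simp [mul_pow, sq_abs]
      rw [hexp] at h4
      have h7 : t * (GJk - Gx) ≤ t * (⟪Jk - (xk - f' xk), x - Jk⟫ + t * (‖x - Jk‖ ^ 2 / 2)) := by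
        nlinarith [h4]
      exact (mul_le_mul_iff_right₀ ht0).mp h7
    have h5 : GJk - Gx ≤ ⟪Jk - (xk - f' xk), x - Jk⟫ :=
      small_t_s17 (by positivity) key
    have h6 : ⟪Jk - (xk - f' xk), x - Jk⟫ = -⟪xk - Jk, x - Jk⟫ + ⟪f' xk, x - Jk⟫ := by
      have : Jk - (xk - f' xk) = -(xk - Jk) + f' xk := by module
      rw [this, inner_add_left, inner_neg_left]
    rw [h6] at h5
    linarith
  -- Step B: gradient inequality for f
  have hB : ⟪f' xk, x - xk⟫ ≤ Fx - Fxk := by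
    obtain ⟨U, hUopen, hUsub, hU⟩ := hdiff
    have hgrad := (hU xk (hUsub hxk)).2
    set φ : ℝ → ℝ := fun t => (f (xk + t • (x - xk))).toReal with hφ
    have hψ : HasDerivAt (fun t : ℝ => xk + t • (x - xk)) (x - xk) 0 := by
      simpa using ((hasDerivAt_id (0:ℝ)).smul_const (x - xk)).const_add xk
    have hgrad' : HasFDerivAt (fun y => (f y).toReal)
        ((InnerProductSpace.toDual ℝ H) (f' xk)) (xk + (0:ℝ) • (x - xk)) := by
      simpa using hasGradientAt_iff_hasFDerivAt.mp hgrad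
    have hderiv : HasDerivAt φ ⟪f' xk, x - xk⟫ 0 := by
      have := hgrad'.comp_hasDerivAt 0 hψ
      simp only [InnerProductSpace.toDual_apply_apply] at this
      exact this
    have htend : Tendsto (slope φ 0) (𝓝[>] 0) (𝓝 ⟪f' xk, x - xk⟫) :=
      (hasDerivAt_iff_tendsto_slope.mp hderiv).mono_left
        (nhdsWithin_mono 0 (fun t ht => ne_of_gt ht))
    refine le_of_tendsto htend ?_
    filter_upwards [Ioc_mem_nhdsGT (zero_lt_one)] with t ht
    obtain ⟨ht0, ht1⟩ := ht
    have hcomb3 : xk + t • (x - xk) = (1 - t) • xk + t • x := by module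
    have h2 := hfconv xk x (1 - t) t (by linarith) ht0.le (by ring)
    rw [← hcomb3, efxk, efx] at h2
    have h3 : φ t ≤ (1 - t) * Fxk + t * Fx := by
      have := EReal.toReal_le_toReal h2 (hfbot _) (by
        rw [← EReal.coe_mul, ← EReal.coe_mul, ← EReal.coe_add]; exact EReal.coe_ne_top _)
      simpa [hφ] using (le_trans this (by
        rw [← EReal.coe_mul, ← EReal.coe_mul, ← EReal.coe_add, EReal.toReal_coe]))
    have hφ0 : φ 0 = Fxk := by simp [hφ, hFxk]
    have hs : slope φ 0 t = (φ t - φ 0) / t := by simp [slope_def_field]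
    rw [hs, hφ0, div_le_iff₀ ht0]
    nlinarith [h3]
  -- Linesearch inequality in real form
  rw [efxk1, egxk1, efxk, egxk, egJk] at hls
  have hls' : Fxk1 + Gxk1 ≤ Fxk + Gxk - βk * (Gxk - GJk)
      - βk * ⟪f' xk, xk - Jk⟫ + (βk / 2) * ‖xk - Jk‖ ^ 2 := by
    exact_mod_cast hls
  -- main real inequality
  have hexp : ‖xk1 - x‖ ^ 2 = ‖xk - x‖ ^ 2 - 2 * (βk * ⟪xk - x, xk - Jk⟫)
      + βk ^ 2 * ‖xk - Jk‖ ^ 2 := by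
    have h : xk1 - x = (xk - x) - βk • (xk - Jk) := by rw [hxk1]; module
    rw [h, norm_sub_sq_real, real_inner_smul_right, norm_smul]
    simp [mul_pow, sq_abs]
  have hinner : ⟪xk - x, xk - Jk⟫ = ‖xk - Jk‖ ^ 2 - ⟪xk - Jk, x - Jk⟫ := by
    have h : xk - x = (xk - Jk) - (x - Jk) := by module
    rw [h, inner_sub_left, real_inner_self_eq_norm_sq, real_inner_comm]
  have hsplit : ⟪f' xk, x - Jk⟫ = ⟪f' xk, x - xk⟫ + ⟪f' xk, xk - Jk⟫ := by
    rw [← inner_add_right]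
    congr 1
    module
  have h1 : 2 * βk * ⟪xk - Jk, x - Jk⟫ ≤ 2 * βk * (Gx - GJk + ⟪f' xk, x - Jk⟫) :=
    mul_le_mul_of_nonneg_left hA (by linarith)
  have h2 : 2 * βk * ⟪f' xk, x - xk⟫ ≤ 2 * βk * (Fx - Fxk) :=
    mul_le_mul_of_nonneg_left hB (by linarith)
  have hneg : βk * (βk - 1) * ‖xk - Jk‖ ^ 2 ≤ 0 :=
    mul_nonpos_of_nonpos_of_nonneg (by nlinarith) (sq_nonneg _)
  have main : ‖xk1 - x‖ ^ 2 ≤ ‖xk - x‖ ^ 2 + 2 * ((Fxk + Gxk) - (Fxk1 + Gxk1))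
      + (2 * βk) * ((Fx + Gx) - (Fxk + Gxk)) := by
    have hinner' : βk * ⟪xk - x, xk - Jk⟫
        = βk * (‖xk - Jk‖ ^ 2 - ⟪xk - Jk, x - Jk⟫) := by rw [hinner]
    have hsplit' : 2 * βk * ⟪f' xk, x - Jk⟫
        = 2 * βk * (⟪f' xk, x - xk⟫ + ⟪f' xk, xk - Jk⟫) := by rw [hsplit]
    linarith [hexp, hinner', hsplit', h1, h2, hls', hneg]
  rw [efxk, egxk, efxk1, egxk1, efx, egx,
    show (2 : EReal) = ((2 : ℝ) : EReal) by norm_cast]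
  exact_mod_cast main
end
end
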